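/- arXiv:math/0405272 — 6 statements merged into one kernel-verified Lean document; each statement's English description precedes it below -/
import Mathlib

section
/- Let T₁ and T₂ be coarsely oriented trees with height functions h₁, h₂ such that |hᵢ(u) − hᵢ(v)| ≤ M for every edge {u,v} of Tᵢ (i = 1,2). Let f : V(T₁) → V(T₂) be a quasi-isometry such that sup over vertices t of |h₂(f t) − h₁(t)| is finite. Then the map f × id : V(T₁) × ℝ → V(T₂) × ℝ, (t, x) ↦ (f t, x), is a quasi-isometry with respect to (D₁, D₂). -/
/-- A map `f` between two sets equipped with distance-like functions is a
quasi-isometry: it quasi-preserves distances and has coarsely dense image. -/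
def IsQuasiIsometry {X Y : Type*} (d₁ : X → X → ℝ) (d₂ : Y → Y → ℝ) (f : X → Y) : Prop :=
  ∃ K C : ℝ, 1 ≤ K ∧ 0 ≤ C ∧
    (∀ x x' : X, d₁ x x' / K - C ≤ d₂ (f x) (f x') ∧ d₂ (f x) (f x') ≤ K * d₁ x x' + C) ∧
    (∀ y : Y, ∃ x : X, d₂ y (f x) ≤ C)

/-- `geodMax G h t t'` is the maximum of the height function `h` over the vertices on
the geodesic (the unique path, for a tree) from `t` to `t'`. -/
noncomputable def geodMax {V : Type*} (G : SimpleGraph V) (h : V → ℝ) (t t' : V) : ℝ :=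
  sSup {x : ℝ | ∃ p : G.Walk t t', p.IsPath ∧ ∃ u ∈ p.support, h u = x}


private lemma walk_height_le {V : Type*} {G : SimpleGraph V} {h : V → ℝ} {M' : ℝ}
    (hM0 : 0 ≤ M') (hM : ∀ u v, G.Adj u v → |h u - h v| ≤ M') :
    ∀ {t t' : V} (p : G.Walk t t'), ∀ u ∈ p.support, h u ≤ h t + M' * p.length := by
  intro t t' p
  induction p with
  | nil =>
    intro u hu
    simp only [SimpleGraph.Walk.support_nil, List.mem_singleton] at hu
    subst hu; simp
  | @cons a b c hadj q ih =>
    intro u hu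
    rw [SimpleGraph.Walk.support_cons, List.mem_cons] at hu
    rcases hu with rfl | hu
    · have : (0:ℝ) ≤ (q.length : ℝ) + 1 := by positivity
      simp only [SimpleGraph.Walk.length_cons]
      push_cast
      nlinarith
    · have h1 := ih u hu
      have h2 := abs_le.1 (hM _ _ hadj)
      simp only [SimpleGraph.Walk.length_cons]
      push_cast
      nlinarith

private lemma path_length_eq {V : Type*} {G : SimpleGraph V} (hT : G.IsTree) {t t' : V}
    (p : G.Walk t t') (hp : p.IsPath) : p.length = G.dist t t' := by
  classical
  refine le_antisymm ?_ (SimpleGraph.dist_le p)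
  obtain ⟨w, hw⟩ := hT.isConnected.exists_walk_length_eq_dist t t'
  have huniq := hT.existsUnique_path t t'
  obtain ⟨p₀, hp₀, hun⟩ := huniq
  have h1 : p = p₀ := hun p hp
  have h2 : w.bypass = p₀ := hun w.bypass w.bypass_isPath
  calc p.length = w.bypass.length := by rw [h1, ← h2]
    _ ≤ w.length := SimpleGraph.Walk.length_bypass_le w
    _ = G.dist t t' := hw

private lemma geodMax_bounds {V : Type*} {G : SimpleGraph V} (hT : G.IsTree) {h : V → ℝ}
    {M' : ℝ} (hM0 : 0 ≤ M') (hM : ∀ u v, G.Adj u v → |h u - h v| ≤ M') (t t' : V) :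
    h t ≤ geodMax G h t t' ∧ geodMax G h t t' ≤ h t + M' * G.dist t t' := by
  obtain ⟨p₀, hp₀, _⟩ := hT.existsUnique_path t t'
  have hbdd : ∀ x ∈ {x : ℝ | ∃ p : G.Walk t t', p.IsPath ∧ ∃ u ∈ p.support, h u = x},
      x ≤ h t + M' * G.dist t t' := by
    rintro x ⟨p, hp, u, hu, rfl⟩
    have := walk_height_le hM0 hM p u hu
    rwa [path_length_eq hT p hp] at this
  have hmem : h t ∈ {x : ℝ | ∃ p : G.Walk t t', p.IsPath ∧ ∃ u ∈ p.support, h u = x} :=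
    ⟨p₀, hp₀, t, p₀.start_mem_support, rfl⟩
  constructor
  · exact le_csSup ⟨_, hbdd⟩ hmem
  · exact csSup_le ⟨_, hmem⟩ hbdd

/-- The distance-like function on `V × ℝ` modelling the warped product `T ⋉ ℝ`
with metric `dt² + e^{-2h} dx²`:
`D((t,x),(t',x')) = d(t,t') + max(0, log(|x-x'|·exp(-H(t,t'))))`. -/
noncomputable def warpedDist {V : Type*} (G : SimpleGraph V) (h : V → ℝ) :
    V × ℝ → V × ℝ → ℝ :=
  fun p q => (G.dist p.1 q.1 : ℝ) +
    max 0 (Real.log (|p.2 - q.2| * Real.exp (-(geodMax G h p.1 q.1))))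

set_option maxHeartbeats 1600000 in
/-- If `f` is a quasi-isometry between coarsely oriented trees (heights changing by at
most `M` along each edge) with `sup_t |h₂(f t) − h₁(t)| < ∞`, then `f × id` is a
quasi-isometry with respect to the warped-product distances. -/
theorem quasiIsometry_prod_id {V₁ V₂ : Type*} (G₁ : SimpleGraph V₁) (G₂ : SimpleGraph V₂)
    (h₁ : V₁ → ℝ) (h₂ : V₂ → ℝ) (M : ℝ)
    (hT₁ : G₁.IsTree) (hT₂ : G₂.IsTree)
    (hlf₁ : ∀ v, (G₁.neighborSet v).Finite) (hlf₂ : ∀ v, (G₂.neighborSet v).Finite)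
    (hM₁ : ∀ u v, G₁.Adj u v → |h₁ u - h₁ v| ≤ M)
    (hM₂ : ∀ u v, G₂.Adj u v → |h₂ u - h₂ v| ≤ M)
    (f : V₁ → V₂)
    (hf : IsQuasiIsometry (fun u v => (G₁.dist u v : ℝ)) (fun u v => (G₂.dist u v : ℝ)) f)
    (hheight : ∃ B : ℝ, ∀ t : V₁, |h₂ (f t) - h₁ t| ≤ B) :
    IsQuasiIsometry (warpedDist G₁ h₁) (warpedDist G₂ h₂) (fun p => (f p.1, p.2)) := by
  obtain ⟨K, C, hK, hC, hbd, hdense⟩ := hf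
  obtain ⟨B, hB⟩ := hheight
  set M' : ℝ := max M 0 with hM'def
  have hM'0 : (0:ℝ) ≤ M' := le_max_right _ _
  have hM₁' : ∀ u v, G₁.Adj u v → |h₁ u - h₁ v| ≤ M' :=
    fun u v hh => (hM₁ u v hh).trans (le_max_left _ _)
  have hM₂' : ∀ u v, G₂.Adj u v → |h₂ u - h₂ v| ≤ M' :=
    fun u v hh => (hM₂ u v hh).trans (le_max_left _ _)
  set B' : ℝ := max B 0 with hB'def
  have hB'0 : (0:ℝ) ≤ B' := le_max_right _ _
  have hB' : ∀ t, |h₂ (f t) - h₁ t| ≤ B' := fun t => (hB t).trans (le_max_left _ _)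
  have hKpos : (0:ℝ) < K := lt_of_lt_of_le one_pos hK
  have hK' : (1:ℝ) ≤ K * (1 + M') := by nlinarith
  have hK'pos : (0:ℝ) < K * (1 + M') := lt_of_lt_of_le one_pos hK'
  refine ⟨K * (1 + M'), C + B', hK', by linarith, ?_, ?_⟩
  · rintro ⟨t, x⟩ ⟨t', x'⟩
    obtain ⟨hlow, hup⟩ := hbd t t'
    set d1 : ℝ := ((G₁.dist t t' : ℕ) : ℝ) with hd1def
    set d2 : ℝ := ((G₂.dist (f t) (f t') : ℕ) : ℝ) with hd2def
    have hd1 : (0:ℝ) ≤ d1 := Nat.cast_nonneg _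
    have hd2 : (0:ℝ) ≤ d2 := Nat.cast_nonneg _
    obtain ⟨hH1l, hH1u⟩ := geodMax_bounds hT₁ hM'0 hM₁' t t'
    obtain ⟨hH2l, hH2u⟩ := geodMax_bounds hT₂ hM'0 hM₂' (f t) (f t')
    set H1 : ℝ := geodMax G₁ h₁ t t' with hH1def
    set H2 : ℝ := geodMax G₂ h₂ (f t) (f t') with hH2def
    have hBt := abs_le.1 (hB' t)
    have hm1 : (0:ℝ) ≤ M' * d1 := mul_nonneg hM'0 hd1
    have hm2 : (0:ℝ) ≤ M' * d2 := mul_nonneg hM'0 hd2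
    have hd1' : d1 ≤ (d2 + C) * K := (div_le_iff₀ hKpos).1 (by linarith)
    by_cases hx : x = x'
    · subst hx
      simp only [warpedDist, sub_self, abs_zero, zero_mul, Real.log_zero, max_self, add_zero]
      have hdiv : d1 / (K * (1 + M')) ≤ d1 / K := by
        gcongr
        nlinarith
      constructor
      · linarith
      · nlinarith [mul_nonneg (mul_nonneg (sub_nonneg.2 hK) hM'0) hd1]
    · have habs : (0:ℝ) < |x - x'| := abs_pos.2 (sub_ne_zero.2 hx)
      set L : ℝ := Real.log |x - x'| with hLdef
      have e1 : Real.log (|x - x'| * Real.exp (-H1)) = L - H1 := by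
        rw [Real.log_mul habs.ne' (Real.exp_ne_zero _), Real.log_exp]; ring
      have e2 : Real.log (|x - x'| * Real.exp (-H2)) = L - H2 := by
        rw [Real.log_mul habs.ne' (Real.exp_ne_zero _), Real.log_exp]; ring
      simp only [warpedDist]
      rw [show ((t, x).2 : ℝ) - ((t', x').2 : ℝ) = x - x' from rfl]
      simp only [← hH1def, ← hH2def, ← hd1def, ← hd2def, e1, e2]
      set T1 : ℝ := max 0 (L - H1) with hT1def
      set T2 : ℝ := max 0 (L - H2) with hT2def
      have hT1 : (0:ℝ) ≤ T1 := le_max_left _ _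
      have hT2 : (0:ℝ) ≤ T2 := le_max_left _ _
      have hLH1 : L - H1 ≤ T1 := le_max_right _ _
      have hLH2 : L - H2 ≤ T2 := le_max_right _ _
      have k1 : T2 ≤ T1 + (M' * d1 + B') :=
        max_le (by linarith) (by linarith)
      have k2 : T1 ≤ T2 + (M' * d2 + B') :=
        max_le (by linarith) (by linarith)
      constructor
      · rw [sub_le_iff_le_add, div_le_iff₀ hK'pos]
        nlinarith [mul_nonneg (sub_nonneg.2 hK) (mul_nonneg hM'0 hd2),
          mul_nonneg (sub_nonneg.2 hK') hT2,
          mul_nonneg (mul_nonneg hKpos.le hM'0) hC,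
          mul_nonneg (sub_nonneg.2 hK') hB'0]
      · nlinarith [mul_nonneg (mul_nonneg (sub_nonneg.2 hK) hM'0) hd1,
          mul_nonneg (sub_nonneg.2 hK') hT1]
  · rintro ⟨s, x⟩
    obtain ⟨t, ht⟩ := hdense s
    refine ⟨(t, x), ?_⟩
    simp only [warpedDist, sub_self, abs_zero, zero_mul, Real.log_zero, max_self, add_zero]
    simp only at ht
    linarith
end

section
/- Let S be a nonempty tree in which every vertex has degree at least 2 (equivalently, an infinite tree without valence-one vertices). Then there exists a set M of edges of S such that every vertex of S is incident to exactly one edge of M. -/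
/-!
Root the tree at a vertex `r`. A vertex has at most one neighbour closer to `r`, so a vertex of
degree at least two has a neighbour farther from `r`; choosing one for every vertex gives an
injective "child" map `f`. Its orbits are disjoint one-sided rays `s, f s, f² s, …` starting at the
vertices outside the range of `f`, and pairing `fᵏ s` with `fᵏ⁺¹ s` for even `k` selects exactly
one edge at every vertex.
-/

open Function

namespace Function

variable {V : Type*}

open Classical in
/-- For injective `f`, the number of steps one can walk backwards from `v` along `f`. -/
noncomputable def rayIndex (f : V → V) (d : V → ℕ) (hd : ∀ v, d (f v) = d v + 1) (v : V) : ℕ :=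
  if h : ∃ u, f u = v then rayIndex f d hd h.choose + 1 else 0
termination_by d v
decreasing_by
  have := hd h.choose
  rw [h.choose_spec] at this
  omega

variable {f : V → V} {d : V → ℕ} {hd : ∀ v, d (f v) = d v + 1}

lemma rayIndex_apply (hf : Injective f) (v : V) :
    rayIndex f d hd (f v) = rayIndex f d hd v + 1 := by
  have h : ∃ u, f u = f v := ⟨v, rfl⟩
  rw [rayIndex, dif_pos h, hf h.choose_spec]

lemma exists_apply_eq_of_rayIndex_ne_zero {v : V} (h : rayIndex f d hd v ≠ 0) :
    ∃ u, f u = v := by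
  by_contra hv
  rw [rayIndex, dif_neg hv] at h
  exact h rfl

end Function

namespace SimpleGraph

variable {V : Type*} {G : SimpleGraph V}

lemma IsTree.eq_of_adj_of_dist_eq_add_one (hT : G.IsTree) (r : V) {u w v : V}
    (hu : G.Adj u v) (hw : G.Adj w v) (hdu : G.dist r v = G.dist r u + 1)
    (hdw : G.dist r v = G.dist r w + 1) : u = w := by
  classical
  obtain ⟨s, hs, -⟩ := (hT.connected r v).exists_path_of_dist
  have eq_penultimate : ∀ x, G.Adj x v → G.dist r v = G.dist r x + 1 → x = s.penultimate := by
    intro x hx hdx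
    obtain ⟨p, hp, hpl⟩ := (hT.connected r x).exists_path_of_dist
    have hxs : x ∈ s.support := by
      by_contra hxs
      have hv := hT.isAcyclic.mem_support_of_ne_mem_support_of_adj_of_isPath hp hs hx hxs
      have := (G.dist_le (p.takeUntil v hv)).trans (p.length_takeUntil_le_length hv)
      omega
    exact hT.isAcyclic.eq_penultimate_of_adj_end hs hx.symm hxs
  rw [eq_penultimate u hu hdu, eq_penultimate w hw hdw]

lemma IsTree.exists_adj_dist_eq_add_one (hT : G.IsTree) (r : V) {v u w : V} (huw : u ≠ w)
    (hu : G.Adj v u) (hw : G.Adj v w) : ∃ x, G.Adj v x ∧ G.dist r x = G.dist r v + 1 := by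
  rcases hT.dist_eq_dist_add_one_of_adj r hu with hdu | hdu
  · rcases hT.dist_eq_dist_add_one_of_adj r hw with hdw | hdw
    · exact absurd (hT.eq_of_adj_of_dist_eq_add_one r hu.symm hw.symm hdu hdw) huw
    · exact ⟨w, hw, hdw⟩
  · exact ⟨u, hu, hdu⟩

theorem exists_perfect_edge_selection_of_injective {f : V → V} (hf : Injective f)
    (hadj : ∀ v, G.Adj v (f v)) (d : V → ℕ) (hd : ∀ v, d (f v) = d v + 1) :
    ∃ M : Set (Sym2 V), M ⊆ G.edgeSet ∧ ∀ v : V, ∃! e : Sym2 V, e ∈ M ∧ v ∈ e := by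
  have index_apply (v : V) := rayIndex_apply (d := d) (hd := hd) hf v
  refine ⟨{e | ∃ v, Even (rayIndex f d hd v) ∧ e = s(v, f v)}, ?_, fun v ↦ ?_⟩
  · rintro _ ⟨v, -, rfl⟩
    exact hadj v
  by_cases hv : Even (rayIndex f d hd v)
  · refine ⟨s(v, f v), ⟨⟨v, hv, rfl⟩, Sym2.mem_mk_left _ _⟩, ?_⟩
    rintro _ ⟨⟨w, hw, rfl⟩, hvw⟩
    rcases Sym2.mem_iff.mp hvw with rfl | rfl
    · rfl
    · rw [index_apply, Nat.even_add_one] at hv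
      exact absurd hw hv
  · obtain ⟨u, rfl⟩ := exists_apply_eq_of_rayIndex_ne_zero fun h ↦ hv (h ▸ Even.zero)
    have hu : Even (rayIndex f d hd u) := by
      rwa [index_apply, Nat.even_add_one, not_not] at hv
    refine ⟨s(u, f u), ⟨⟨u, hu, rfl⟩, Sym2.mem_mk_right _ _⟩, ?_⟩
    rintro _ ⟨⟨w, hw, rfl⟩, hvw⟩
    rcases Sym2.mem_iff.mp hvw with rfl | huw
    · exact absurd hw hv
    · rw [hf huw]

end SimpleGraph

open SimpleGraph in
/-- In a tree in which every vertex has degree at least two, there is a set of edges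
containing exactly one edge incident to each vertex. -/
theorem tree_exists_perfect_edge_selection {V : Type*} (G : SimpleGraph V)
    (hT : G.IsTree)
    (hdeg : ∀ v : V, ∃ u w : V, u ≠ w ∧ G.Adj v u ∧ G.Adj v w) :
    ∃ M : Set (Sym2 V), M ⊆ G.edgeSet ∧ ∀ v : V, ∃! e : Sym2 V, e ∈ M ∧ v ∈ e := by
  obtain ⟨r⟩ := hT.connected.nonempty
  choose f hadj hdist using fun v ↦
    have ⟨_, _, huw, hu, hw⟩ := hdeg v
    hT.exists_adj_dist_eq_add_one r huw hu hw
  have hf : Injective f := fun u w h ↦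
    hT.eq_of_adj_of_dist_eq_add_one r (hadj u) (h ▸ hadj w) (hdist u) (h ▸ hdist w)
  exact exists_perfect_edge_selection_of_injective hf hadj (G.dist r) hdist
end

section
/- Let T be a homogeneous coarsely oriented tree such that every vertex has at least two neighbors of strictly greater height and at least two neighbors of strictly smaller height. Then there exists β₀ > 0 such that for every β with 0 ≤ β ≤ β₀ there exist C > 0 and a lamination of T by lines of slope (β, C). -/
universe u

/-- A coarsely oriented tree is homogeneous if the multiset of height changes along the
edges incident to a vertex is the same for all vertices; equivalently there is a
bijection between the neighbor sets of any two vertices matching height changes. -/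
def Homogeneous {V : Type*} (G : SimpleGraph V) (h : V → ℝ) : Prop :=
  ∀ v w : V, ∃ σ : G.neighborSet v ≃ G.neighborSet w,
    ∀ u : G.neighborSet v, h u - h v = h (σ u) - h w

/-- A line of slope `(β, C)` in a coarsely oriented tree: a bi-infinite geodesic along
which the height changes at rate `β` up to an additive error `C`. -/
def IsSlopeLine {V : Type*} (G : SimpleGraph V) (h : V → ℝ) (β C : ℝ) (γ : ℤ → V) : Prop :=
  (∀ n m : ℤ, G.dist (γ n) (γ m) = (n - m).natAbs) ∧
  (∀ n m : ℤ, |h (γ n) - h (γ m) - β * (n - m)| ≤ C)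

/-- A lamination of a coarsely oriented tree by lines of slope `(β, C)`: a family of
such lines whose images partition the vertex set, so that exactly one line of the
family passes through each vertex. -/
def IsLamination {V : Type*} {ι : Type*} (G : SimpleGraph V) (h : V → ℝ) (β C : ℝ)
    (L : ι → ℤ → V) : Prop :=
  (∀ i : ι, IsSlopeLine G h β C (L i)) ∧
  (∀ v : V, ∃! i : ι, v ∈ Set.range (L i))

/-!
Fix an up-step `a > 0` at some vertex and a second positive step `b`: another up-step value if
there is one, and `b = a` otherwise, in which case every vertex has two neighbours with each of
the height changes `±a`. By homogeneity every vertex then has enough neighbours with height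
changes `±a`, `±b`. For `0 ≤ β < a` (we take `β₀ = a / 2`), the doubled Beatty word of density
`t = (β + b) / (a + b)` in the steps `a` and `-b` has partial sums within `2 (a + b)` of `β n`.
Going outward from a root, each vertex receives a phase in this word and a predecessor and a
successor realising the neighbouring letters, either continuing the line through its parent or
starting a new one. The successor map is then a non-backtracking permutation of the tree, so its
orbits are geodesic lines of slope `β`.
-/

namespace SimpleGraph

variable {V : Type*} {G : SimpleGraph V} {r v w : V}

lemma Connected.exists_adj_dist_add_one_eq (hG : G.Connected) (hv : v ≠ r) :
    ∃ u, G.Adj v u ∧ G.dist r u + 1 = G.dist r v := by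
  obtain ⟨p, hp⟩ := hG.exists_walk_length_eq_dist v r
  cases p with
  | nil => exact absurd rfl hv
  | @cons _ u _ hvu q =>
    refine ⟨u, hvu, ?_⟩
    have hle : G.dist u r ≤ q.length := dist_le q
    have hge : G.dist v r ≤ G.dist u r + 1 := by
      simpa [dist_eq_one_iff_adj.mpr hvu, add_comm] using
        hG.dist_triangle (u := v) (v := u) (w := r)
    rw [Walk.length_cons] at hp
    rw [dist_comm (u := r), dist_comm (u := r)]
    omega

lemma IsTree.eq_of_adj_of_dist_add_one_eq (hT : G.IsTree) {x u w₁ w₂ : V} (h₁ : G.Adj u w₁)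
    (h₂ : G.Adj u w₂) (hd₁ : G.dist x w₁ + 1 = G.dist x u) (hd₂ : G.dist x w₂ + 1 = G.dist x u) :
    w₁ = w₂ := by
  classical
  obtain ⟨p, hp, hpl⟩ := hT.connected.exists_path_of_dist x u
  have key : ∀ w, G.Adj u w → G.dist x w + 1 = G.dist x u → w = p.penultimate := by
    intro w huw hd
    obtain ⟨q, hq, hql⟩ := hT.connected.exists_path_of_dist x w
    have hu : u ∉ q.support := fun hu => by
      have := (dist_le (q.takeUntil u hu)).trans (q.length_takeUntil_le_length hu)
      omega
    exact hT.isAcyclic.eq_penultimate_of_adj_end hp huw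
      (hT.isAcyclic.mem_support_of_ne_mem_support_of_adj_of_isPath hp hq huw hu)
  rw [key w₁ h₁ hd₁, key w₂ h₂ hd₂]

open Classical in
variable (G) in
noncomputable def parent (r v : V) : V :=
  if hv : ∃ u, G.Adj v u ∧ G.dist r u + 1 = G.dist r v then hv.choose else v

lemma Connected.adj_parent (hG : G.Connected) (hv : v ≠ r) :
    G.Adj v (G.parent r v) ∧ G.dist r (G.parent r v) + 1 = G.dist r v := by
  have hex := hG.exists_adj_dist_add_one_eq hv
  rw [parent, dif_pos hex]
  exact hex.choose_spec

lemma IsTree.parent_eq_of_adj (hT : G.IsTree) (hvw : G.Adj v w) :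
    (w ≠ r ∧ G.parent r w = v) ∨ (v ≠ r ∧ G.parent r v = w) := by
  have hne : ∀ {x y}, G.Adj x y → G.dist r x = G.dist r y + 1 → x ≠ r ∧ G.parent r x = y :=
    fun {x y} hxy hd => by
      have hx : x ≠ r := by rintro rfl; simp at hd
      have hpar := hT.connected.adj_parent hx
      exact ⟨hx, hT.eq_of_adj_of_dist_add_one_eq hpar.1 hxy hpar.2 hd.symm⟩
  rcases hT.dist_eq_dist_add_one_of_adj r hvw with hd | hd
  · exact .inr (hne hvw hd)
  · exact .inl (hne hvw.symm hd)

lemma IsTree.dist_pow_apply (hT : G.IsTree) {E : Equiv.Perm V} (hadj : ∀ v, G.Adj v (E v))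
    (hnb : ∀ v, E (E v) ≠ v) (v : V) : ∀ n : ℕ, G.dist v ((E ^ n) v) = n
  | 0 => by simp
  | 1 => by simpa using hadj v
  | n + 2 => by
    have hsucc : ∀ k : ℕ, (E ^ (k + 1)) v = E ((E ^ k) v) := fun k => by
      rw [pow_succ', Equiv.Perm.mul_apply]
    have h₀ := hT.dist_pow_apply hadj hnb v n
    have h₁ := hT.dist_pow_apply hadj hnb v (n + 1)
    rw [hsucc] at h₁
    rw [hsucc, hsucc]
    rcases hT.dist_eq_dist_add_one_of_adj v (hadj (E ((E ^ n) v))) with hd | hd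
    · -- else `(E ^ n) v` and `E (E ((E ^ n) v))` would be distinct neighbours of `E ((E ^ n) v)`
      -- closer to `v`
      exact absurd (hT.eq_of_adj_of_dist_add_one_eq (x := v) (hadj (E ((E ^ n) v)))
        (hadj ((E ^ n) v)).symm (by omega) (by omega)) (hnb _)
    · omega

lemma IsTree.dist_zpow_apply (hT : G.IsTree) {E : Equiv.Perm V} (hadj : ∀ v, G.Adj v (E v))
    (hnb : ∀ v, E (E v) ≠ v) (v : V) (n m : ℤ) :
    G.dist ((E ^ n) v) ((E ^ m) v) = (n - m).natAbs := by
  wlog hmn : m ≤ n generalizing m n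
  · rw [dist_comm, this m n (by omega), ← Int.natAbs_neg, neg_sub]
  obtain ⟨k, rfl⟩ := Int.exists_add_of_le hmn
  rw [dist_comm, add_comm, zpow_add, Equiv.Perm.mul_apply, zpow_natCast,
    hT.dist_pow_apply hadj hnb]
  omega

end SimpleGraph

namespace Equiv.Perm

variable {α A : Type*} [AddCommGroup A]

lemma apply_zpow_apply_eq_add_zsmul (E : Perm α) {f : α → A} {c : A}
    (hf : ∀ x, f (E x) = f x + c) (x : α) (n : ℤ) : f ((E ^ n) x) = f x + n • c := by
  induction n using Int.induction_on with
  | zero => simp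
  | succ n ih =>
    rw [add_comm (n : ℤ), zpow_one_add, mul_apply, hf, ih, add_zsmul, one_zsmul]
    abel
  | pred n ih =>
    have := hf ((E ^ (-(n : ℤ) - 1)) x)
    rw [← mul_apply, ← zpow_one_add, add_sub_cancel, ih] at this
    rw [sub_zsmul, one_zsmul, ← sub_eq_of_eq_add this.symm]
    abel

lemma existsUnique_mem_range_zpow_apply_out (E : Perm α) (x : α) :
    ∃! q : Quotient (SameCycle.setoid E), x ∈ Set.range fun n : ℤ => (E ^ n) q.out :=
  ⟨⟦x⟧, Quotient.mk_out (s := SameCycle.setoid E) x,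
    fun q ⟨n, hn⟩ => (Quotient.out_eq q).symm.trans (Quotient.sound ⟨n, hn⟩)⟩

end Equiv.Perm

theorem SimpleGraph.IsTree.isLamination_zpow_apply_out {V : Type*} {G : SimpleGraph V}
    {h : V → ℝ} (hT : G.IsTree) {E : Equiv.Perm V} (hadj : ∀ v, G.Adj v (E v))
    (hnb : ∀ v, E (E v) ≠ v) {φ : V → ℤ} {S : ℤ → ℝ} {β D : ℝ} (hφ : ∀ v, φ (E v) = φ v + 1)
    (hh : ∀ v, h (E v) - h v = S (φ v + 1) - S (φ v)) (hS : ∀ n, |S n - β * n| ≤ D) :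
    IsLamination G h β (2 * D)
      fun q : Quotient (Equiv.Perm.SameCycle.setoid E) => fun n => (E ^ n) q.out := by
  refine ⟨fun q => ⟨hT.dist_zpow_apply hadj hnb _, fun n m => ?_⟩,
    E.existsUnique_mem_range_zpow_apply_out⟩
  have hphase := E.apply_zpow_apply_eq_add_zsmul hφ q.out
  -- `h - S ∘ φ` is constant along orbits
  have hheight := E.apply_zpow_apply_eq_add_zsmul (f := fun v => h v - S (φ v)) (c := 0)
    (fun v => by simp only [hφ, add_zero]; linarith [hh v]) q.out
  simp only [hphase, smul_zero, add_zero, smul_eq_mul, mul_one] at hheight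
  have key : h ((E ^ n) q.out) - h ((E ^ m) q.out) - β * (n - m) =
      (S (φ q.out + n) - β * ↑(φ q.out + n)) - (S (φ q.out + m) - β * ↑(φ q.out + m)) := by
    push_cast; linarith [hheight n, hheight m]
  rw [key, two_mul]
  exact (abs_sub _ _).trans (add_le_add (hS _) (hS _))

/-- The counting function of the Beatty word of density `t` with every letter written twice; the
repetition provides two equal consecutive letters, which new lines need when `a = b`. -/
noncomputable def doubledBeatty (t : ℝ) (n : ℤ) : ℤ :=
  ⌊t * (n / 2 : ℤ)⌋ + ⌊t * ((n + 1) / 2 : ℤ)⌋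

lemma doubledBeatty_succ_sub (t : ℝ) (n : ℤ) :
    doubledBeatty t (n + 1) - doubledBeatty t n = ⌊t * (n / 2 : ℤ) + t⌋ - ⌊t * (n / 2 : ℤ)⌋ := by
  rw [doubledBeatty, doubledBeatty, show (n + 1 + 1) / 2 = n / 2 + 1 by omega]
  push_cast
  ring_nf

lemma doubledBeatty_succ_sub_mem {t : ℝ} (ht0 : 0 ≤ t) (ht1 : t ≤ 1) (n : ℤ) :
    doubledBeatty t (n + 1) - doubledBeatty t n = 0 ∨
      doubledBeatty t (n + 1) - doubledBeatty t n = 1 := by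
  rw [doubledBeatty_succ_sub]
  set x := t * (n / 2 : ℤ)
  have hle : ⌊x⌋ ≤ ⌊x + t⌋ := Int.floor_le_floor (by linarith)
  have hge : ⌊x + t⌋ ≤ ⌊x⌋ + 1 := (Int.floor_le_floor (by linarith)).trans_eq (Int.floor_add_one x)
  omega

lemma abs_doubledBeatty_sub_le (t : ℝ) (n : ℤ) : |(doubledBeatty t n : ℝ) - t * n| ≤ 2 := by
  have hn : (n : ℝ) = (n / 2 : ℤ) + ((n + 1) / 2 : ℤ) := by exact_mod_cast (by omega : n = _ + _)
  have h₁ := Int.floor_le (t * (n / 2 : ℤ))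
  have h₂ := Int.lt_floor_add_one (t * (n / 2 : ℤ))
  have h₃ := Int.floor_le (t * ((n + 1) / 2 : ℤ))
  have h₄ := Int.lt_floor_add_one (t * ((n + 1) / 2 : ℤ))
  rw [doubledBeatty, hn, abs_le]
  push_cast
  constructor <;> linarith

lemma exists_succ_sub_eq_of_abs_sub_mul_le {S : ℤ → ℝ} {a b β D : ℝ}
    (hstep : ∀ n, S (n + 1) - S n = a ∨ S (n + 1) - S n = -b) (hS : ∀ n, |S n - β * n| ≤ D)
    (hβ : -b < β) : ∃ n, S (n + 1) - S n = a := by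
  by_contra! hne
  have hlin : ∀ k : ℕ, S k = S 0 - b * k := by
    intro k
    induction k with
    | zero => simp
    | succ k ih =>
      have := (hstep k).resolve_left (hne k)
      push_cast at this ⊢
      linarith
  obtain ⟨k, hk⟩ := exists_nat_gt ((D + |S 0|) / (β + b))
  have hpos : 0 < β + b := by linarith
  have h₁ := (abs_le.1 (hS k)).1
  have h₂ := le_abs_self (S 0)
  rw [div_lt_iff₀ hpos] at hk
  rw [hlin k] at h₁
  push_cast at h₁
  linarith

noncomputable def beattyHeight (a b t : ℝ) (n : ℤ) : ℝ := (a + b) * doubledBeatty t n - b * n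

section BeattyHeight

variable {a b t : ℝ}

lemma beattyHeight_succ_sub_mem (ht0 : 0 ≤ t) (ht1 : t ≤ 1) (n : ℤ) :
    beattyHeight a b t (n + 1) - beattyHeight a b t n = a ∨
      beattyHeight a b t (n + 1) - beattyHeight a b t n = -b := by
  have hstep : beattyHeight a b t (n + 1) - beattyHeight a b t n =
      (a + b) * ((doubledBeatty t (n + 1) - doubledBeatty t n : ℤ) : ℝ) - b := by
    simp only [beattyHeight]; push_cast; ring
  rcases doubledBeatty_succ_sub_mem ht0 ht1 n with h | h <;> rw [hstep, h] <;> norm_num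

lemma abs_beattyHeight_sub_le (hab : 0 ≤ a + b) (n : ℤ) :
    |beattyHeight a b t n - ((a + b) * t - b) * n| ≤ 2 * (a + b) := by
  have : beattyHeight a b t n - ((a + b) * t - b) * n = (a + b) * (doubledBeatty t n - t * n) := by
    rw [beattyHeight]; ring
  rw [this, abs_mul, abs_of_nonneg hab, mul_comm]
  exact mul_le_mul_of_nonneg_right (abs_doubledBeatty_sub_le t n) hab

lemma beattyHeight_one_sub_zero (ht0 : 0 ≤ t) (ht1 : t < 1) :
    beattyHeight a b t 1 - beattyHeight a b t 0 = -b := by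
  norm_num [beattyHeight, doubledBeatty, Int.floor_eq_zero_iff.2 ⟨ht0, ht1⟩]

lemma beattyHeight_two_sub_one :
    beattyHeight a b t 2 - beattyHeight a b t 1 = beattyHeight a b t 1 - beattyHeight a b t 0 := by
  norm_num [beattyHeight, doubledBeatty]
  ring

end BeattyHeight

section LineConstruction

variable {V : Type*} {G : SimpleGraph V} {h : V → ℝ} {s : ℤ → ℝ}

structure Link (V : Type*) where
  phase : ℤ
  pred : V
  succ : V

variable (G h s) in
structure IsLink (v : V) (D : Link V) : Prop where
  adj_pred : G.Adj v D.pred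
  adj_succ : G.Adj v D.succ
  pred_ne_succ : D.pred ≠ D.succ
  height_pred : h D.pred - h v = -s (D.phase - 1)
  height_succ : h D.succ - h v = s D.phase

variable (G h s) in
/-- `E` is a link at the child `v` of `u` that continues the line of the link `D` at `u` exactly
when the edge `uv` lies on it. -/
structure IsChildLink (u : V) (D : Link V) (v : V) (E : Link V) : Prop where
  isLink : IsLink G h s v E
  pred_eq_iff : E.pred = u ↔ D.succ = v
  succ_eq_iff : E.succ = u ↔ D.pred = v
  phase_of_succ : D.succ = v → E.phase = D.phase + 1
  phase_of_pred : D.pred = v → E.phase + 1 = D.phase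

variable (G h s) in
/-- `succ`: a line that reached `v` from `w` with step `s (n - 1)` can go on with step `s n`; `pred`
is the same backwards; `seed`: a new line can be started at `v` away from `w`. -/
structure CanExtendLinks : Prop where
  seed : ∀ v w : V, ∃ D, IsLink G h s v D ∧ D.pred ≠ w ∧ D.succ ≠ w
  succ : ∀ v w n, h w - h v = -s (n - 1) → ∃ x, G.Adj v x ∧ x ≠ w ∧ h x - h v = s n
  pred : ∀ v w n, h w - h v = s n → ∃ x, G.Adj v x ∧ x ≠ w ∧ h x - h v = -s (n - 1)

lemma IsLink.exists_isChildLink (hext : CanExtendLinks G h s) {u : V} {D : Link V}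
    (hD : IsLink G h s u D) (v : V) : ∃ E, IsChildLink G h s u D v E := by
  by_cases hs : D.succ = v
  · subst hs
    obtain ⟨x, hx, hxu, hxh⟩ := hext.succ D.succ u (D.phase + 1)
      (by rw [add_sub_cancel_right]; linarith [hD.height_succ])
    refine ⟨⟨D.phase + 1, u, x⟩, ⟨hD.adj_succ.symm, hx, hxu.symm, ?_, hxh⟩,
      iff_of_true rfl rfl, iff_of_false hxu hD.pred_ne_succ, fun _ => rfl,
      fun h => absurd h hD.pred_ne_succ⟩
    simp only [add_sub_cancel_right]
    linarith [hD.height_succ]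
  by_cases hp : D.pred = v
  · subst hp
    obtain ⟨x, hx, hxu, hxh⟩ := hext.pred D.pred u (D.phase - 1) (by linarith [hD.height_pred])
    exact ⟨⟨D.phase - 1, x, u⟩, ⟨hx, hD.adj_pred.symm, hxu, hxh, by linarith [hD.height_pred]⟩,
      iff_of_false hxu hD.pred_ne_succ.symm, iff_of_true rfl rfl,
      fun h => absurd h.symm hD.pred_ne_succ, fun _ => sub_add_cancel _ _⟩
  obtain ⟨E, hE, hEp, hEs⟩ := hext.seed v u
  exact ⟨E, hE, iff_of_false hEp hs, iff_of_false hEs hp, fun h => absurd h hs,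
    fun h => absurd h hp⟩

variable (G h s) in
/-- Only at the root is the parent not closer to `r`; elsewhere the link is chosen compatibly with
the parent's. -/
noncomputable def lineLink (r v : V) : Link V :=
  haveI : Nonempty (Link V) := ⟨⟨0, r, r⟩⟩
  if G.dist r (G.parent r v) < G.dist r v then
    Classical.epsilon (IsChildLink G h s (G.parent r v) (lineLink r (G.parent r v)) v)
  else Classical.epsilon (IsLink G h s v)
termination_by G.dist r v

variable {r : V}

theorem isLink_lineLink (hext : CanExtendLinks G h s) (v : V) :
    IsLink G h s v (lineLink G h s r v) := by
  rw [lineLink]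
  split_ifs
  · exact (Classical.epsilon_spec
      ((isLink_lineLink hext (G.parent r v)).exists_isChildLink hext v)).isLink
  · exact Classical.epsilon_spec ((hext.seed v v).imp fun _ hD => hD.1)
termination_by G.dist r v

lemma isChildLink_lineLink (hext : CanExtendLinks G h s) (hG : G.Connected) {v : V} (hv : v ≠ r) :
    IsChildLink G h s (G.parent r v) (lineLink G h s r (G.parent r v)) v (lineLink G h s r v) := by
  rw [lineLink.eq_1 G h s r v, if_pos (by have := (hG.adj_parent hv).2; omega)]
  exact Classical.epsilon_spec ((isLink_lineLink hext _).exists_isChildLink hext v)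

lemma lineLink_pred_succ (hext : CanExtendLinks G h s) (hT : G.IsTree) (v : V) :
    (lineLink G h s r (lineLink G h s r v).succ).pred = v ∧
      (lineLink G h s r (lineLink G h s r v).succ).phase = (lineLink G h s r v).phase + 1 := by
  rcases hT.parent_eq_of_adj (r := r) (isLink_lineLink hext v).adj_succ with
    ⟨hw, hpar⟩ | ⟨hv, hpar⟩
  · have hc := isChildLink_lineLink hext hT.connected hw
    rw [hpar] at hc
    exact ⟨hc.pred_eq_iff.2 rfl, hc.phase_of_succ rfl⟩
  · have hc := isChildLink_lineLink hext hT.connected hv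
    rw [hpar] at hc
    have hp := hc.succ_eq_iff.1 rfl
    exact ⟨hp, by have := hc.phase_of_pred hp; omega⟩

lemma lineLink_succ_pred (hext : CanExtendLinks G h s) (hT : G.IsTree) (v : V) :
    (lineLink G h s r (lineLink G h s r v).pred).succ = v := by
  rcases hT.parent_eq_of_adj (r := r) (isLink_lineLink hext v).adj_pred with
    ⟨hw, hpar⟩ | ⟨hv, hpar⟩
  · have hc := isChildLink_lineLink hext hT.connected hw
    rw [hpar] at hc
    exact hc.succ_eq_iff.2 rfl
  · have hc := isChildLink_lineLink hext hT.connected hv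
    rw [hpar] at hc
    exact hc.pred_eq_iff.1 rfl

theorem SimpleGraph.IsTree.exists_perm_of_canExtendLinks (hT : G.IsTree)
    (hext : CanExtendLinks G h s) :
    ∃ (E : Equiv.Perm V) (φ : V → ℤ), ∀ v, G.Adj v (E v) ∧ E (E v) ≠ v ∧
      φ (E v) = φ v + 1 ∧ h (E v) - h v = s (φ v) := by
  obtain ⟨r⟩ := hT.nonempty
  let E : Equiv.Perm V := ⟨fun v => (lineLink G h s r v).succ, fun v => (lineLink G h s r v).pred,
    fun v => (lineLink_pred_succ hext hT v).1, lineLink_succ_pred hext hT⟩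
  refine ⟨E, fun v => (lineLink G h s r v).phase, fun v =>
    ⟨(isLink_lineLink hext v).adj_succ, fun hEE => ?_, (lineLink_pred_succ hext hT v).2,
      (isLink_lineLink hext v).height_succ⟩⟩
  refine (isLink_lineLink (r := r) hext (E v)).pred_ne_succ ?_
  change (lineLink G h s r (E v)).pred = E (E v)
  rw [hEE]
  exact (lineLink_pred_succ hext hT v).1

end LineConstruction

section Homogeneous

variable {V : Type*} {G : SimpleGraph V} {h : V → ℝ}

lemma Homogeneous.exists_adj_sub_eq (hhom : Homogeneous G h) {u x : V} (hx : G.Adj u x) (v : V) :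
    ∃ y, G.Adj v y ∧ h y - h v = h x - h u := by
  obtain ⟨σ, hσ⟩ := hhom u v
  exact ⟨σ ⟨x, hx⟩, (σ ⟨x, hx⟩).2, (hσ ⟨x, hx⟩).symm⟩

lemma Homogeneous.exists_adj_ne_sub_eq (hhom : Homogeneous G h) {u x y : V} (hxy : x ≠ y)
    (hx : G.Adj u x) (hy : G.Adj u y) (hxy' : h x = h y) (v w : V) :
    ∃ z, G.Adj v z ∧ z ≠ w ∧ h z - h v = h x - h u := by
  obtain ⟨σ, hσ⟩ := hhom u v
  have hne : σ ⟨x, hx⟩ ≠ σ ⟨y, hy⟩ := fun he => hxy (congrArg Subtype.val (σ.injective he))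
  by_cases hxw : (σ ⟨x, hx⟩ : V) = w
  · refine ⟨σ ⟨y, hy⟩, (σ ⟨y, hy⟩).2, fun hyw => hne (Subtype.ext (hxw.trans hyw.symm)), ?_⟩
    rw [← hσ ⟨y, hy⟩, hxy']
  · exact ⟨σ ⟨x, hx⟩, (σ ⟨x, hx⟩).2, hxw, (hσ ⟨x, hx⟩).symm⟩

/-- For `a ≠ b` this asks for a neighbour with each height change `±a`, `±b`; for `a = b`, for two
neighbours with each height change `±a`. -/
def SuppliesSteps (G : SimpleGraph V) (h : V → ℝ) (a b : ℝ) : Prop :=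
  ∀ v w : V, ∀ c ∈ ({a, -a, b, -b} : Set ℝ), (h w - h v = c → a = b) →
    ∃ x, G.Adj v x ∧ x ≠ w ∧ h x - h v = c

theorem Homogeneous.exists_suppliesSteps [Nonempty V] (hhom : Homogeneous G h)
    (hup : ∀ v : V, ∃ u u' : V, u ≠ u' ∧ G.Adj v u ∧ G.Adj v u' ∧ h v < h u ∧ h v < h u')
    (hdown : ∀ v : V, ∃ u u' : V, u ≠ u' ∧ G.Adj v u ∧ G.Adj v u' ∧ h u < h v ∧ h u' < h v) :
    ∃ a b : ℝ, 0 < a ∧ 0 < b ∧ SuppliesSteps G h a b := by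
  obtain ⟨r⟩ := ‹Nonempty V›
  obtain ⟨u₁, u₂, hu, hru₁, hru₂, hhu₁, hhu₂⟩ := hup r
  by_cases hall : ∀ x, G.Adj r x → h r < h x → h x = h u₁
  · have hdown_eq : ∀ x, G.Adj r x → h x < h r → h x - h r = -(h u₁ - h r) := by
      intro x hrx hx
      obtain ⟨y, hry, hy⟩ := hhom.exists_adj_sub_eq hrx.symm r
      have := hall y hry (by linarith)
      linarith
    obtain ⟨d₁, d₂, hd, hrd₁, hrd₂, hhd₁, hhd₂⟩ := hdown r
    refine ⟨h u₁ - h r, h u₁ - h r, by linarith, by linarith, fun v w c hc _ => ?_⟩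
    obtain rfl | rfl : c = h u₁ - h r ∨ c = -(h u₁ - h r) := by
      simp only [Set.mem_insert_iff, Set.mem_singleton_iff] at hc
      tauto
    · exact hhom.exists_adj_ne_sub_eq hu hru₁ hru₂ (hall u₂ hru₂ hhu₂).symm v w
    · obtain ⟨z, hvz, hzw, hz⟩ := hhom.exists_adj_ne_sub_eq hd hrd₁ hrd₂
        (by linarith [hdown_eq d₁ hrd₁ hhd₁, hdown_eq d₂ hrd₂ hhd₂]) v w
      exact ⟨z, hvz, hzw, hz.trans (hdown_eq d₁ hrd₁ hhd₁)⟩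
  · push Not at hall
    obtain ⟨u₃, hru₃, hhu₃, hne⟩ := hall
    refine ⟨h u₁ - h r, h u₃ - h r, by linarith, by linarith, fun v w c hc hcw => ?_⟩
    have hab : h u₁ - h r ≠ h u₃ - h r := fun he => hne (by linarith)
    obtain ⟨x, hvx, hx⟩ : ∃ x, G.Adj v x ∧ h x - h v = c := by
      simp only [Set.mem_insert_iff, Set.mem_singleton_iff] at hc
      rcases hc with rfl | rfl | rfl | rfl
      · exact hhom.exists_adj_sub_eq hru₁ v
      · simpa using hhom.exists_adj_sub_eq hru₁.symm v
      · exact hhom.exists_adj_sub_eq hru₃ v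
      · simpa using hhom.exists_adj_sub_eq hru₃.symm v
    exact ⟨x, hvx, fun hxw => hab (hcw (hxw ▸ hx)), hx⟩

end Homogeneous

section Steps

variable {a b : ℝ} {s : ℤ → ℝ}

lemma ne_neg_of_forall_eq_or_eq (ha : 0 < a) (hb : 0 < b) (hab : a ≠ b)
    (hs : ∀ n, s n = a ∨ s n = -b) (m n : ℤ) : s m ≠ -s n := by
  rcases hs m with hm | hm <;> rcases hs n with hn | hn <;> rw [hm, hn] <;>
    first | (intro; linarith) | exact fun he => hab (by linarith)

lemma exists_ne_neg_pred (ha : 0 < a) (hb : 0 < b) (hs : ∀ n, s n = a ∨ s n = -b)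
    (hs₁ : s 1 = s 0) (hsa : ∃ n, s n = a) (hsb : ∃ n, s n = -b) (d : ℝ) :
    ∃ n, s n ≠ -s (n - 1) ∧ (a ≠ b → s n ≠ d ∧ -s (n - 1) ≠ d) := by
  by_cases hab : a = b
  · refine ⟨1, ?_, fun hab' => absurd hab hab'⟩
    rw [hs₁, sub_self]
    rcases hs 0 with h0 | h0 <;> rw [h0] <;> intro <;> linarith
  have hdisj := ne_neg_of_forall_eq_or_eq ha hb hab hs
  have hex : ∀ e, ∃ n, s n ≠ e := fun e => by
    obtain ⟨na, hna⟩ := hsa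
    obtain ⟨nb, hnb⟩ := hsb
    by_cases he : s na = e
    · exact ⟨nb, by rw [hnb, ← he, hna]; intro; linarith⟩
    · exact ⟨na, he⟩
  by_cases hd : ∃ m, s m = d
  · obtain ⟨m, rfl⟩ := hd
    obtain ⟨n, hn⟩ := hex (s m)
    exact ⟨n, hdisj _ _, fun _ => ⟨hn, fun he => hdisj m (n - 1) he.symm⟩⟩
  · obtain ⟨m, hm⟩ := hex (-d)
    refine ⟨m + 1, hdisj _ _, fun _ => ⟨fun he => hd ⟨_, he⟩, ?_⟩⟩
    rw [add_sub_cancel_right]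
    exact fun he => hm (by rw [← he, neg_neg])

theorem SuppliesSteps.canExtendLinks {V : Type*} {G : SimpleGraph V} {h : V → ℝ}
    (hsup : SuppliesSteps G h a b) (ha : 0 < a) (hb : 0 < b) (hs : ∀ n, s n = a ∨ s n = -b)
    (hs₁ : s 1 = s 0) (hsa : ∃ n, s n = a) (hsb : ∃ n, s n = -b) : CanExtendLinks G h s := by
  have hmem : ∀ n, s n ∈ ({a, -a, b, -b} : Set ℝ) ∧ -s n ∈ ({a, -a, b, -b} : Set ℝ) := fun n => by
    rcases hs n with hn | hn <;> simp [hn]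
  have hfresh : ∀ m n, s m = -s n → a = b := fun m n he =>
    of_not_not fun hab => ne_neg_of_forall_eq_or_eq ha hb hab hs m n he
  refine ⟨fun v w => ?_, fun v w n hw => ?_, fun v w n hw => ?_⟩
  · obtain ⟨n, hn, hnd⟩ := exists_ne_neg_pred ha hb hs hs₁ hsa hsb (h w - h v)
    obtain ⟨x, hvx, hxw, hx⟩ := hsup v w _ (hmem (n - 1)).2 fun he =>
      of_not_not fun hab => (hnd hab).2 he.symm
    obtain ⟨y, hvy, hyw, hy⟩ := hsup v w _ (hmem n).1 fun he =>
      of_not_not fun hab => (hnd hab).1 he.symm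
    refine ⟨⟨n, x, y⟩, ⟨hvx, hvy, fun hxy => hn ?_, hx, hy⟩, hxw, hyw⟩
    rw [← hx, ← hy, show x = y from hxy]
  · exact hsup v w _ (hmem n).1 fun he => hfresh n (n - 1) (he.symm.trans hw)
  · exact hsup v w _ (hmem (n - 1)).2 fun he => hfresh n (n - 1) (hw.symm.trans he)

end Steps

theorem exists_constant_slope_lamination_general {V : Type u} (G : SimpleGraph V) (h : V → ℝ)
    (hT : G.IsTree) (hhom : Homogeneous G h)
    (hup : ∀ v : V, ∃ u u' : V, u ≠ u' ∧ G.Adj v u ∧ G.Adj v u' ∧ h v < h u ∧ h v < h u')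
    (hdown : ∀ v : V, ∃ u u' : V, u ≠ u' ∧ G.Adj v u ∧ G.Adj v u' ∧ h u < h v ∧ h u' < h v) :
    ∃ β₀ : ℝ, 0 < β₀ ∧ ∀ β : ℝ, 0 ≤ β → β ≤ β₀ →
      ∃ C : ℝ, 0 < C ∧ ∃ (ι : Type u) (L : ι → ℤ → V), IsLamination G h β C L := by
  have := hT.nonempty
  obtain ⟨a, b, ha, hb, hsup⟩ := hhom.exists_suppliesSteps hup hdown
  refine ⟨a / 2, by positivity, fun β hβ0 hβa => ?_⟩
  set t := (β + b) / (a + b) with ht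
  have ht0 : 0 ≤ t := by positivity
  have ht1 : t < 1 := (div_lt_one (by positivity)).2 (by linarith)
  have hβ : (a + b) * t - b = β := by rw [ht, mul_div_cancel₀ _ (by positivity)]; ring
  have hS := abs_beattyHeight_sub_le (a := a) (b := b) (t := t) (by positivity)
  rw [hβ] at hS
  have hstep := beattyHeight_succ_sub_mem (a := a) (b := b) ht0 ht1.le
  obtain ⟨E, φ, hE⟩ := hT.exists_perm_of_canExtendLinks <| hsup.canExtendLinks ha hb hstep
    beattyHeight_two_sub_one (exists_succ_sub_eq_of_abs_sub_mul_le hstep hS (by linarith))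
    ⟨0, beattyHeight_one_sub_zero ht0 ht1⟩
  exact ⟨2 * (2 * (a + b)), by positivity, _, _, hT.isLamination_zpow_apply_out
    (fun v => (hE v).1) (fun v => (hE v).2.1) (fun v => (hE v).2.2.1) (fun v => (hE v).2.2.2) hS⟩

/-- Existence of constant slope laminations: if `T` is a homogeneous coarsely oriented
tree with at least two strictly height-increasing and two strictly height-decreasing
edges at each vertex, then there is `β₀ > 0` such that for every `0 ≤ β ≤ β₀` there
are `C > 0` and a lamination of `T` by lines of slope `(β, C)`. -/
theorem exists_constant_slope_lamination {V : Type u} (G : SimpleGraph V) (h : V → ℝ)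
    (hT : G.IsTree) (hlf : ∀ v, (G.neighborSet v).Finite) (hhom : Homogeneous G h)
    (hup : ∀ v : V, ∃ u u' : V, u ≠ u' ∧ G.Adj v u ∧ G.Adj v u' ∧ h v < h u ∧ h v < h u')
    (hdown : ∀ v : V, ∃ u u' : V, u ≠ u' ∧ G.Adj v u ∧ G.Adj v u' ∧ h u < h v ∧ h u' < h v) :
    ∃ β₀ : ℝ, 0 < β₀ ∧ ∀ β : ℝ, 0 ≤ β → β ≤ β₀ →
      ∃ C : ℝ, 0 < C ∧ ∃ (ι : Type u) (L : ι → ℤ → V), IsLamination G h β C L :=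
  exists_constant_slope_lamination_general G h hT hhom hup hdown
end

section
/- Let T be a coarsely oriented tree, and let β₀ > 0 and M > 0 be such that |h(u) − h(v)| ≤ M for every edge {u,v} of T, and every vertex of T has at least two neighbors whose height exceeds its own by at least β₀ and at least two neighbors whose height is smaller by at least β₀. Then for every vertex v, every neighbor w of v with h(w) − h(v) ≥ β₀, and every β with 0 ≤ β ≤ β₀, there exists a map r : ℕ → V(T) with r(0) = v, r(1) = w, d(r(n), r(m)) = |n − m| for all n, m (a geodesic ray), and |h(r(n)) − h(v) − β·n| ≤ M for all n ∈ ℕ. -/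
/-!
Build the ray greedily. From `r n`, step to a neighbour other than `r (n - 1)` that is higher by
at least `β₀` when the error `h (r n) - h v - β n` is at most `β`, and lower by at least `β₀`
otherwise; each vertex has two such neighbours, so one of them avoids backtracking. A
non-backtracking walk in a tree is a geodesic, and since an edge changes the height by at most
`M`, the greedy rule keeps the error in `[-M, M]`.
-/

namespace SimpleGraph

variable {V : Type*} {G : SimpleGraph V}

/-- In an acyclic graph, `x` has at most one neighbour closer to `u`: the penultimate vertex of the
path from `u` to `x`. -/
theorem IsAcyclic.dist_eq_dist_add_one_of_adj_of_ne (hG : G.IsAcyclic) {u x y z : V}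
    (hreach : G.Reachable u y) (hyx : G.Adj y x) (hxz : G.Adj x z) (hyz : y ≠ z)
    (hdist : G.dist u x = G.dist u y + 1) : G.dist u z = G.dist u x + 1 := by
  have hux : G.Reachable u x := hreach.trans hyx.reachable
  refine (hG.dist_eq_dist_add_one_of_adj_of_reachable u hxz hux).resolve_left fun hzx ↦ hyz ?_
  obtain ⟨p, -, hp⟩ := hreach.exists_path_of_dist
  obtain ⟨q, -, hq⟩ := (hux.trans hxz.reachable).exists_path_of_dist
  have hp' : (p.concat hyx).IsPath := by
    apply Walk.isPath_of_length_eq_dist; rw [Walk.length_concat]; omega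
  have hq' : (q.concat hxz.symm).IsPath := by
    apply Walk.isPath_of_length_eq_dist; rw [Walk.length_concat]; omega
  have hpq := congrArg (fun r : G.Path u x ↦ r.1.penultimate)
    ((hG.subsingleton_path u x).elim ⟨_, hp'⟩ ⟨_, hq'⟩)
  simpa only [Walk.penultimate_concat] using hpq

theorem IsAcyclic.dist_add_eq_of_nonBacktracking (hG : G.IsAcyclic) {f : ℕ → V}
    (hadj : ∀ n, G.Adj (f n) (f (n + 1))) (hnb : ∀ n, f (n + 2) ≠ f n) (n k : ℕ) :
    G.dist (f n) (f (n + k)) = k := by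
  suffices ∀ m, G.dist (f n) (f (n + m)) = m ∧ G.dist (f n) (f (n + m + 1)) = m + 1 from
    (this k).1
  have hreach (j : ℕ) : G.Reachable (f n) (f (n + j)) := by
    induction j with
    | zero => rfl
    | succ j ih => exact ih.trans (hadj _).reachable
  intro m
  induction m with
  | zero => simpa using dist_eq_one_iff_adj.mpr (hadj n)
  | succ m ih =>
    refine ⟨ih.2, ?_⟩
    rw [← add_assoc, hG.dist_eq_dist_add_one_of_adj_of_ne (hreach m) (hadj _) (hadj _) (hnb _).symm
      (by rw [ih.1, ih.2]), ih.2]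

theorem IsAcyclic.dist_eq_natAbs_of_nonBacktracking (hG : G.IsAcyclic) {f : ℕ → V}
    (hadj : ∀ n, G.Adj (f n) (f (n + 1))) (hnb : ∀ n, f (n + 2) ≠ f n) (n m : ℕ) :
    G.dist (f n) (f m) = ((n : ℤ) - m).natAbs := by
  rcases le_total n m with hnm | hmn
  · obtain ⟨k, rfl⟩ := Nat.exists_eq_add_of_le hnm
    rw [hG.dist_add_eq_of_nonBacktracking hadj hnb]
    omega
  · obtain ⟨k, rfl⟩ := Nat.exists_eq_add_of_le hmn
    rw [dist_comm, hG.dist_add_eq_of_nonBacktracking hadj hnb]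
    omega

end SimpleGraph

theorem exists_seq_of_forall_exists_ne {α : Type*} {Q : ℕ → α → α → Prop} {v w : α}
    (hvw : Q 0 v w) (hQ : ∀ n p x, ∃ y, y ≠ p ∧ Q (n + 1) x y) :
    ∃ f : ℕ → α, f 0 = v ∧ f 1 = w ∧ (∀ n, f (n + 2) ≠ f n) ∧ ∀ n, Q n (f n) (f (n + 1)) := by
  choose next hne hnext using hQ
  let f : ℕ → α := Nat.twoStepInduction v w fun n x y ↦ next n x y
  refine ⟨f, rfl, rfl, fun n ↦ hne n (f n) (f (n + 1)), ?_⟩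
  rintro (_ | n)
  exacts [hvw, hnext n (f n) (f (n + 1))]

theorem exists_ne_of_exists_pair {α : Type*} {A P : α → Prop}
    (h : ∃ u u', u ≠ u' ∧ A u ∧ A u' ∧ P u ∧ P u') (p : α) : ∃ u, u ≠ p ∧ A u ∧ P u := by
  obtain ⟨u, u', hne, hu, hu', hPu, hPu'⟩ := h
  by_cases hup : u = p
  · exact ⟨u', fun h ↦ hne (hup.trans h.symm), hu', hPu'⟩
  · exact ⟨u, hup, hu, hPu⟩

theorem abs_add_sub_le_of_greedy {e Δ β β₀ M : ℝ} (he : |e| ≤ M) (hΔ : |Δ| ≤ M) (hβ : 0 ≤ β)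
    (hββ₀ : β ≤ β₀) (hup : e ≤ β → β₀ ≤ Δ) (hdown : β < e → Δ ≤ -β₀) : |e + Δ - β| ≤ M := by
  rw [abs_le] at *
  rcases le_or_gt e β with heβ | heβ
  · have := hup heβ
    constructor <;> linarith
  · have := hdown heβ
    constructor <;> linarith

theorem exists_slope_ray_general {V : Type*} (G : SimpleGraph V) (h : V → ℝ)
    (hT : G.IsTree)
    (β₀ M : ℝ)
    (hedge : ∀ u v : V, G.Adj u v → |h u - h v| ≤ M)
    (hup : ∀ v : V, ∃ u u' : V, u ≠ u' ∧ G.Adj v u ∧ G.Adj v u' ∧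
      β₀ ≤ h u - h v ∧ β₀ ≤ h u' - h v)
    (hdown : ∀ v : V, ∃ u u' : V, u ≠ u' ∧ G.Adj v u ∧ G.Adj v u' ∧
      β₀ ≤ h v - h u ∧ β₀ ≤ h v - h u') :
    ∀ v w : V, G.Adj v w → β₀ ≤ h w - h v → ∀ β : ℝ, 0 ≤ β → β ≤ β₀ →
      ∃ r : ℕ → V, r 0 = v ∧ r 1 = w ∧
        (∀ n m : ℕ, G.dist (r n) (r m) = ((n : ℤ) - (m : ℤ)).natAbs) ∧
        (∀ n : ℕ, |h (r n) - h v - β * n| ≤ M) := by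
  intro v w hvw hwv β hβ hββ₀
  let err (n : ℕ) (x : V) : ℝ := h x - h v - β * n
  obtain ⟨r, rfl, rfl, hnb, hr⟩ := exists_seq_of_forall_exists_ne
    (Q := fun n x y ↦ G.Adj x y ∧ (err n x ≤ β → β₀ ≤ h y - h x) ∧
      (β < err n x → h y - h x ≤ -β₀))
    ⟨hvw, fun _ ↦ hwv, fun hlt ↦ by
      simp only [err, sub_self, Nat.cast_zero, mul_zero] at hlt; linarith⟩
    fun n p x ↦ by
      by_cases hx : err (n + 1) x ≤ β
      · obtain ⟨y, hyp, hxy, hy⟩ := exists_ne_of_exists_pair (hup x) p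
        exact ⟨y, hyp, hxy, fun _ ↦ hy, fun hlt ↦ absurd hx (not_le.mpr hlt)⟩
      · obtain ⟨y, hyp, hxy, hy⟩ := exists_ne_of_exists_pair (hdown x) p
        exact ⟨y, hyp, hxy, fun hle ↦ absurd hle hx, fun _ ↦ by linarith⟩
  refine ⟨r, rfl, rfl, hT.isAcyclic.dist_eq_natAbs_of_nonBacktracking (fun n ↦ (hr n).1) hnb, ?_⟩
  intro n
  induction n with
  | zero => simpa using (abs_nonneg _).trans (hedge _ _ hvw)
  | succ n ih =>
    have hstep := abs_add_sub_le_of_greedy ih (hedge _ _ (hr n).1.symm) hβ hββ₀ (hr n).2.1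
      (hr n).2.2
    convert hstep using 2
    push_cast
    ring

/-- Construction of geodesic rays of slope `β`: in a coarsely oriented tree whose edges
change height by at most `M` and in which every vertex has at least two neighbors
higher by at least `β₀` and at least two neighbors lower by at least `β₀`, through
every edge increasing height by at least `β₀` there is a geodesic ray of slope
`(β, M)` for every `0 ≤ β ≤ β₀`. -/
theorem exists_slope_ray {V : Type*} (G : SimpleGraph V) (h : V → ℝ)
    (hT : G.IsTree) (hlf : ∀ v, (G.neighborSet v).Finite)
    (β₀ M : ℝ) (hβ₀ : 0 < β₀) (hM : 0 < M)
    (hedge : ∀ u v : V, G.Adj u v → |h u - h v| ≤ M)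
    (hup : ∀ v : V, ∃ u u' : V, u ≠ u' ∧ G.Adj v u ∧ G.Adj v u' ∧
      β₀ ≤ h u - h v ∧ β₀ ≤ h u' - h v)
    (hdown : ∀ v : V, ∃ u u' : V, u ≠ u' ∧ G.Adj v u ∧ G.Adj v u' ∧
      β₀ ≤ h v - h u ∧ β₀ ≤ h v - h u') :
    ∀ v w : V, G.Adj v w → β₀ ≤ h w - h v → ∀ β : ℝ, 0 ≤ β → β ≤ β₀ →
      ∃ r : ℕ → V, r 0 = v ∧ r 1 = w ∧
        (∀ n m : ℕ, G.dist (r n) (r m) = ((n : ℤ) - (m : ℤ)).natAbs) ∧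
        (∀ n : ℕ, |h (r n) - h v - β * n| ≤ M) :=
  exists_slope_ray_general G h hT β₀ M hedge hup hdown
end

section
/- For every integer n ≥ 2, the Baumslag–Solitar group BS(n,n) contains a subgroup of index n isomorphic to F_n × ℤ, where F_n is the free group of rank n. -/
/-- The single relator `x y^m x⁻¹ y⁻ⁿ` of the Baumslag–Solitar group. -/
def BSRels (m n : ℤ) : Set (FreeGroup (Fin 2)) :=
  {FreeGroup.of 0 * FreeGroup.of 1 ^ m * (FreeGroup.of 0)⁻¹ * (FreeGroup.of 1 ^ n)⁻¹}

/-- The Baumslag–Solitar group `BS(m,n) = ⟨x, y | x y^m x⁻¹ = y^n⟩`. -/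
abbrev BS (m n : ℤ) : Type := PresentedGroup (BSRels m n)

open SemidirectProduct Multiplicative

namespace BSaux

variable (n : ℕ) [NeZero n]

/-- Shift permutation action of `ZMod n` on the free group on `ZMod n`. -/
def shiftPerm : Multiplicative (ZMod n) →* MulAut (FreeGroup (ZMod n)) :=
  MonoidHom.mk' (fun a => FreeGroup.freeGroupCongr (Equiv.addLeft (Multiplicative.toAdd a)))
    (by
      intro a b
      show _ = _ * _
      rw [MulAut.mul_def, FreeGroup.freeGroupCongr_trans]
      congr 1
      ext x
      simp [add_assoc])

def phi : Multiplicative ℤ →* MulAut (FreeGroup (ZMod n)) :=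
  (shiftPerm n).comp (AddMonoidHom.toMultiplicative (Int.castAddHom (ZMod n)))

omit [NeZero n] in
lemma phi_apply_of (t : ℤ) (i : ZMod n) :
    phi n (ofAdd t) (FreeGroup.of i) = FreeGroup.of ((t : ZMod n) + i) := rfl

omit [NeZero n] in
lemma phi_eq_one {t : Multiplicative ℤ} (h : ((Multiplicative.toAdd t : ℤ) : ZMod n) = 0) :
    phi n t = 1 := by
  have ht : phi n t = shiftPerm n (ofAdd ((Multiplicative.toAdd t : ℤ) : ZMod n)) := rfl
  rw [ht, h]
  exact map_one _

omit [NeZero n] in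
lemma mk_rel_one {α : Type*} (rels : Set (FreeGroup α)) {r : FreeGroup α} (h : r ∈ rels) :
    PresentedGroup.mk rels r = 1 :=
  (QuotientGroup.eq_one_iff r).mpr (Subgroup.subset_normalClosure h)

def X : BS (n : ℤ) (n : ℤ) := PresentedGroup.of 0
def Y : BS (n : ℤ) (n : ℤ) := PresentedGroup.of 1

omit [NeZero n] in
lemma commute_X_Yn : Commute (X n) (Y n ^ (n : ℤ)) := by
  have h : PresentedGroup.mk (BSRels (n:ℤ) (n:ℤ))
      (FreeGroup.of 0 * FreeGroup.of 1 ^ (n:ℤ) * (FreeGroup.of 0)⁻¹ *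
        (FreeGroup.of 1 ^ (n:ℤ))⁻¹) = 1 :=
    mk_rel_one _ rfl
  have h2 : X n * Y n ^ (n:ℤ) * (X n)⁻¹ * (Y n ^ (n:ℤ))⁻¹ = 1 := by
    simpa [X, Y, PresentedGroup.of] using h
  have h3 : X n * Y n ^ (n:ℤ) * (X n)⁻¹ = Y n ^ (n:ℤ) := mul_inv_eq_one.mp h2
  rw [mul_inv_eq_iff_eq_mul] at h3
  exact h3

omit [NeZero n] in
lemma conj_eq_conj {s t : ℤ} (h : (s : ZMod n) = (t : ZMod n)) :
    Y n ^ s * X n * (Y n ^ s)⁻¹ = Y n ^ t * X n * (Y n ^ t)⁻¹ := by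
  have hd : (n : ℤ) ∣ s - t := by
    rwa [← ZMod.intCast_zmod_eq_zero_iff_dvd, Int.cast_sub, sub_eq_zero]
  obtain ⟨k, hk⟩ := hd
  have hs : s = t + n * k := by omega
  have hc : Commute (X n) (Y n ^ ((n : ℤ) * k)) := by
    rw [zpow_mul]
    exact (commute_X_Yn n).zpow_right k
  subst hs
  have h4 : Y n ^ ((n:ℤ)*k) * X n * (Y n ^ ((n:ℤ)*k))⁻¹ = X n := by
    rw [← hc.eq]
    group
  calc Y n ^ (t + (n:ℤ)*k) * X n * (Y n ^ (t + (n:ℤ)*k))⁻¹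
      = Y n ^ t * (Y n ^ ((n:ℤ)*k) * X n * (Y n ^ ((n:ℤ)*k))⁻¹) * (Y n ^ t)⁻¹ := by group
    _ = Y n ^ t * X n * (Y n ^ t)⁻¹ := by rw [h4]

/-- The concrete model: `F_n ⋊ ℤ` with `ℤ` acting by cyclic shift. -/
abbrev G : Type := FreeGroup (ZMod n) ⋊[phi n] Multiplicative ℤ

/-- `F_n → BS`, sending generator `i` to `y^i x y^{-i}`. -/
def f₁ : FreeGroup (ZMod n) →* BS (n:ℤ) (n:ℤ) :=
  FreeGroup.lift (fun i => Y n ^ (i.val : ℤ) * X n * (Y n ^ (i.val : ℤ))⁻¹)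

/-- `ℤ → BS`, sending `1` to `y`. -/
def f₂ : Multiplicative ℤ →* BS (n:ℤ) (n:ℤ) := zpowersHom _ (Y n)

lemma val_cast (i : ZMod n) : ((i.val : ℤ) : ZMod n) = i := by
  push_cast
  simp [ZMod.natCast_val, ZMod.cast_id]

lemma compat : ∀ g : Multiplicative ℤ, (f₁ n).comp ((phi n) g).toMonoidHom =
    (MulAut.conj ((f₂ n) g)).toMonoidHom.comp (f₁ n) := by
  intro g
  apply FreeGroup.ext_hom
  intro i
  have hg : g = ofAdd (Multiplicative.toAdd g) := rfl
  simp only [MonoidHom.comp_apply, MulEquiv.coe_toMonoidHom]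
  rw [hg, phi_apply_of]
  set t := Multiplicative.toAdd g with htdef
  show (f₁ n) (FreeGroup.of ((t : ZMod n) + i)) = MulAut.conj (Y n ^ t) ((f₁ n) (FreeGroup.of i))
  rw [f₁, FreeGroup.lift_apply_of, FreeGroup.lift_apply_of]
  rw [MulAut.conj_apply]
  have key : Y n ^ ((((t : ZMod n) + i).val : ℤ)) * X n * (Y n ^ ((((t : ZMod n) + i).val : ℤ)))⁻¹
      = Y n ^ (t + (i.val : ℤ)) * X n * (Y n ^ (t + (i.val : ℤ)))⁻¹ := by
    apply conj_eq_conj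
    rw [val_cast]
    push_cast
    rw [ZMod.natCast_val, ZMod.cast_id]
  rw [key, zpow_add]
  group

/-- The homomorphism `G →* BS`. -/
def down : G n →* BS (n:ℤ) (n:ℤ) := SemidirectProduct.lift (f₁ n) (f₂ n) (compat n)

/-- The homomorphism `BS →* G`. -/
def up : BS (n:ℤ) (n:ℤ) →* G n :=
  PresentedGroup.toGroup (f := ![inl (FreeGroup.of (0 : ZMod n)), inr (ofAdd (1 : ℤ))])
    (by
      intro r hr
      rw [BSRels, Set.mem_singleton_iff] at hr
      subst hr
      set f : Fin 2 → G n := ![inl (FreeGroup.of (0 : ZMod n)), inr (ofAdd (1 : ℤ))] with hf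
      have e0 : FreeGroup.lift f (FreeGroup.of 0) = inl (FreeGroup.of (0:ZMod n)) := by
        rw [FreeGroup.lift_apply_of, hf]; rfl
      have e1 : FreeGroup.lift f (FreeGroup.of 1) = inr (ofAdd (1:ℤ)) := by
        rw [FreeGroup.lift_apply_of, hf]; rfl
      simp only [map_mul, map_inv, map_zpow, e0, e1]
      have h1 : (inr (ofAdd (1:ℤ)) : G n) ^ (n:ℤ) = inr (ofAdd (n:ℤ)) := by
        rw [← map_zpow]
        congr 1
        rw [← ofAdd_zsmul]
        norm_num
      rw [h1]
      have hphi : phi n (ofAdd (n:ℤ)) = 1 := phi_eq_one n (by simp)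
      have h4 : (inr (ofAdd (n:ℤ)) : G n) * inl (FreeGroup.of (0:ZMod n)) *
          inr (ofAdd (n:ℤ))⁻¹ = inl (FreeGroup.of (0:ZMod n)) := by
        rw [← inl_aut, hphi, MulAut.one_apply]
      have h2 : (inl (FreeGroup.of (0 : ZMod n)) : G n) * inr (ofAdd (n:ℤ))
          = inr (ofAdd (n:ℤ)) * inl (FreeGroup.of (0 : ZMod n)) := by
        calc (inl (FreeGroup.of (0:ZMod n)) : G n) * inr (ofAdd (n:ℤ))
            = (inr (ofAdd (n:ℤ)) * inl (FreeGroup.of (0:ZMod n)) * inr (ofAdd (n:ℤ))⁻¹) *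
              inr (ofAdd (n:ℤ)) := by rw [h4]
          _ = inr (ofAdd (n:ℤ)) * inl (FreeGroup.of (0:ZMod n)) := by
              rw [map_inv]; group
      rw [h2]
      group)

lemma up_X : up n (X n) = inl (FreeGroup.of (0 : ZMod n)) := by
  rw [X, up, PresentedGroup.toGroup.of]
  rfl

lemma up_Y : up n (Y n) = inr (ofAdd (1 : ℤ)) := by
  rw [Y, up, PresentedGroup.toGroup.of]
  rfl

lemma down_up : (down n).comp (up n) = MonoidHom.id _ := by
  apply PresentedGroup.ext
  intro j
  fin_cases j
  · show down n (up n (X n)) = X n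
    rw [up_X, down, SemidirectProduct.lift_inl, f₁, FreeGroup.lift_apply_of]
    simp [ZMod.val_zero]
  · show down n (up n (Y n)) = Y n
    rw [up_Y, down, SemidirectProduct.lift_inr, f₂, zpowersHom_apply]
    simp

lemma up_down : (up n).comp (down n) = MonoidHom.id _ := by
  apply SemidirectProduct.hom_ext
  · apply FreeGroup.ext_hom
    intro i
    simp only [MonoidHom.comp_apply, MonoidHom.id_apply]
    rw [down, SemidirectProduct.lift_inl, f₁, FreeGroup.lift_apply_of]
    rw [map_mul, map_mul, map_inv, map_zpow, up_X, up_Y, ← map_zpow]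
    have h5 : (inr ((ofAdd (1:ℤ)) ^ ((i.val : ℤ))) : G n) = inr (ofAdd ((i.val : ℤ))) := by
      congr 1
      rw [← ofAdd_zsmul]
      norm_num
    rw [h5]
    have h6 := (inl_aut (φ := phi n) (ofAdd ((i.val : ℤ))) (FreeGroup.of (0 : ZMod n))).symm
    rw [phi_apply_of, add_zero, val_cast] at h6
    rw [map_inv] at h6
    exact h6
  · apply MonoidHom.ext_mint
    simp only [MonoidHom.comp_apply, MonoidHom.id_apply]
    rw [down, SemidirectProduct.lift_inr, f₂, zpowersHom_apply]
    simpa using up_Y n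

/-- The isomorphism `BS(n,n) ≃* F_n ⋊ ℤ`. -/
def theta : BS (n:ℤ) (n:ℤ) ≃* G n :=
  MonoidHom.toMulEquiv (up n) (down n) (down_up n) (up_down n)

def pi : G n →* Multiplicative (ZMod n) :=
  (AddMonoidHom.toMultiplicative (Int.castAddHom (ZMod n))).comp rightHom

lemma pi_surjective : Function.Surjective (pi n) := by
  intro z
  obtain ⟨t, ht⟩ := ZMod.intCast_surjective (Multiplicative.toAdd z)
  refine ⟨inr (ofAdd t), ?_⟩
  show ofAdd ((t : ZMod n)) = z
  rw [ht, ofAdd_toAdd]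

lemma mem_ker_iff (g : G n) :
    g ∈ (pi n).ker ↔ (n : ℤ) ∣ Multiplicative.toAdd g.right := by
  rw [MonoidHom.mem_ker]
  rw [show pi n g = ofAdd ((Multiplicative.toAdd g.right : ℤ) : ZMod n) from rfl]
  rw [show (1 : Multiplicative (ZMod n)) = ofAdd 0 from rfl]
  rw [Equiv.apply_eq_iff_eq ofAdd]
  exact ZMod.intCast_zmod_eq_zero_iff_dvd _ n

lemma nz : (n : ℤ) ≠ 0 := by
  exact_mod_cast (NeZero.ne n)

/-- The kernel of `pi` is `F_n × ℤ`. -/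
def kerEquiv : (pi n).ker ≃* FreeGroup (ZMod n) × Multiplicative ℤ where
  toFun g := (g.1.left, ofAdd (Multiplicative.toAdd g.1.right / n))
  invFun p := ⟨⟨p.1, ofAdd ((n : ℤ) * Multiplicative.toAdd p.2)⟩, by
    rw [mem_ker_iff]
    exact Dvd.intro _ rfl⟩
  left_inv g := by
    apply Subtype.ext
    have hd := (mem_ker_iff n g.1).mp g.2
    refine SemidirectProduct.ext rfl ?_
    show ofAdd ((n : ℤ) * (Multiplicative.toAdd g.1.right / n)) = g.1.right
    rw [Int.mul_ediv_cancel' hd, ofAdd_toAdd]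
  right_inv p := by
    refine Prod.ext rfl ?_
    show ofAdd ((n : ℤ) * Multiplicative.toAdd p.2 / n) = p.2
    rw [Int.mul_ediv_cancel_left _ (nz n), ofAdd_toAdd]
  map_mul' g h := by
    have hg := (mem_ker_iff n g.1).mp g.2
    have hh := (mem_ker_iff n h.1).mp h.2
    have hcoe : ((g * h : (pi n).ker) : G n) = (g : G n) * (h : G n) := rfl
    refine Prod.ext ?_ ?_
    · show ((g : G n) * (h : G n)).left = (g : G n).left * (h : G n).left
      rw [mul_left]
      have h1 : phi n (g : G n).right = 1 := by
        apply phi_eq_one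
        rwa [ZMod.intCast_zmod_eq_zero_iff_dvd]
      rw [h1, MulAut.one_apply]
    · show ofAdd (Multiplicative.toAdd ((g : G n) * (h : G n)).right / n)
        = ofAdd (Multiplicative.toAdd (g : G n).right / n) *
          ofAdd (Multiplicative.toAdd (h : G n).right / n)
      rw [mul_right, ← ofAdd_add]
      obtain ⟨a, ha⟩ := hg
      obtain ⟨b, hb⟩ := hh
      congr 1
      rw [toAdd_mul, ha, hb, ← mul_add, Int.mul_ediv_cancel_left _ (nz n),
        Int.mul_ediv_cancel_left _ (nz n), Int.mul_ediv_cancel_left _ (nz n)]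

end BSaux

/-- For every `n ≥ 2`, the group `BS(n,n)` contains a subgroup of index `n` isomorphic
to `Fₙ × ℤ`. -/
theorem BS_nn_contains_free_times_Z (n : ℕ) (hn : 2 ≤ n) :
    ∃ H : Subgroup (BS (n : ℤ) (n : ℤ)), H.index = n ∧
      Nonempty (H ≃* FreeGroup (Fin n) × Multiplicative ℤ) := by
  haveI : NeZero n := ⟨by omega⟩
  refine ⟨((BSaux.pi n).ker).map ((BSaux.theta n).symm : BSaux.G n →* BS (n:ℤ) (n:ℤ)), ?_, ?_⟩
  · have hker : (((BSaux.theta n).symm : BSaux.G n →* BS (n:ℤ) (n:ℤ))).ker ≤ (BSaux.pi n).ker := by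
      intro x hx
      rw [MonoidHom.mem_ker] at hx
      have hx1 : x = 1 := by
        apply (BSaux.theta n).symm.injective
        simpa using hx
      rw [hx1]
      exact one_mem _
    have h := Subgroup.index_map_eq ((BSaux.pi n).ker)
      (f := ((BSaux.theta n).symm : BSaux.G n →* BS (n:ℤ) (n:ℤ)))
      (BSaux.theta n).symm.surjective hker
    rw [h, Subgroup.index_ker, MonoidHom.range_eq_top.mpr (BSaux.pi_surjective n),
      Subgroup.card_top, Nat.card_congr (Multiplicative.toAdd (α := ZMod n)),
      Nat.card_zmod]
  · refine ⟨((BSaux.theta n).symm.subgroupMap ((BSaux.pi n).ker)).symm.trans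
      ((BSaux.kerEquiv n).trans (MulEquiv.prodCongr
        (FreeGroup.freeGroupCongr (Fintype.equivFinOfCardEq (ZMod.card n)))
        (MulEquiv.refl _)))⟩
end

section
/- For i = 1, 2, let T_i be a coarsely oriented tree in which every vertex has finite degree at least 3 and |h_i(u) − h_i(v)| ≤ M for every edge {u,v}, equipped with a lamination by lines of slope (β_i, C_i) with β_i > 0. Suppose f : T₁' → T₂' is a graph isomorphism between the quotient trees and K > 0 is such that for every edge E of T₁', the unique edge of T₁ joining the pair of lines forming E and the unique edge of T₂ joining the pair of lines forming f(E) have heights differing by at most K. Then there exists a coarsely orientation preserving quasi-isometry F : V(T₁) → V(T₂) which maps the vertices of each line l of the lamination of T₁ into the line f(l) of the lamination of T₂. -/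
/-- A coarsely orientation preserving quasi-isometry between coarsely oriented trees:
a quasi-isometry for the graph metrics which moreover coarsely preserves height
changes. -/
def IsCOPQuasiIsometry {V₁ V₂ : Type*} (G₁ : SimpleGraph V₁) (h₁ : V₁ → ℝ)
    (G₂ : SimpleGraph V₂) (h₂ : V₂ → ℝ) (f : V₁ → V₂) : Prop :=
  IsQuasiIsometry (fun u v => (G₁.dist u v : ℝ)) (fun u v => (G₂.dist u v : ℝ)) f ∧
    ∃ C' : ℝ, 0 ≤ C' ∧ ∀ u v : V₁, |(h₂ (f v) - h₂ (f u)) - (h₁ v - h₁ u)| ≤ C'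

/-- The quotient graph of a tree with a lamination: vertices are the lines of the
lamination, two lines being adjacent iff some edge of the tree joins them. -/
def quotGraph {V ι : Type*} (G : SimpleGraph V) (L : ι → ℤ → V) : SimpleGraph ι :=
  SimpleGraph.fromRel (fun i j => ∃ n m : ℤ, G.Adj (L i n) (L j m))

lemma adj_bound_to_dist_bound {V₁ V₂ : Type*} {G₁ : SimpleGraph V₁} {G₂ : SimpleGraph V₂}
    (hc₁ : G₁.Connected) (hc₂ : G₂.Connected) {F : V₁ → V₂} {A : ℝ} (hA : 0 ≤ A)
    (hadj : ∀ u v, G₁.Adj u v → (G₂.dist (F u) (F v) : ℝ) ≤ A) (u v : V₁) :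
    (G₂.dist (F u) (F v) : ℝ) ≤ A * G₁.dist u v := by
  suffices H : ∀ {a b : V₁} (w : G₁.Walk a b), (G₂.dist (F a) (F b) : ℝ) ≤ A * w.length by
    obtain ⟨w, hw⟩ := hc₁.exists_walk_length_eq_dist u v
    have := H w
    rw [hw] at this
    exact this
  intro a b w
  induction w with
  | nil => simp [SimpleGraph.dist_self]
  | @cons a b c h p ih =>
    have t := hc₂.dist_triangle (u := F a) (v := F b) (w := F c)
    have t' : (G₂.dist (F a) (F c) : ℝ) ≤ (G₂.dist (F a) (F b) : ℝ) + (G₂.dist (F b) (F c) : ℝ) := by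
      exact_mod_cast t
    have hab := hadj _ _ h
    simp only [SimpleGraph.Walk.length_cons]
    push_cast
    nlinarith [ih, hab, t']

lemma IsSlopeLine.C_nonneg {V : Type*} {G : SimpleGraph V} {h : V → ℝ} {β C : ℝ} {γ : ℤ → V}
    (hγ : IsSlopeLine G h β C γ) : 0 ≤ C := by
  have := hγ.2 0 0
  simpa using this

lemma IsSlopeLine.dist_le' {V : Type*} {G : SimpleGraph V} {h : V → ℝ} {β C : ℝ} {γ : ℤ → V}
    (hγ : IsSlopeLine G h β C γ) (hβ : 0 < β) (n m : ℤ) :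
    (G.dist (γ n) (γ m) : ℝ) ≤ (|h (γ n) - h (γ m)| + C) / β := by
  have h2 := hγ.2 n m
  push_cast at h2
  have hd : (G.dist (γ n) (γ m) : ℝ) = |(n : ℝ) - m| := by
    rw [hγ.1 n m]
    rw [Nat.cast_natAbs]
    push_cast
    ring_nf
  rw [hd, le_div_iff₀ hβ]
  rw [abs_le] at h2
  rcases abs_cases ((n:ℝ) - m) with ⟨he, _⟩ | ⟨he, _⟩ <;>
    rcases abs_cases (h (γ n) - h (γ m)) with ⟨hf, _⟩ | ⟨hf, _⟩ <;>
      nlinarith [h2.1, h2.2]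

lemma IsSlopeLine.height_near {V : Type*} {G : SimpleGraph V} {h : V → ℝ} {β C : ℝ}
    {γ : ℤ → V} (hγ : IsSlopeLine G h β C γ) (hβ : 0 < β) (t : ℝ) :
    |h (γ ⌊(t - h (γ 0)) / β⌋) - t| ≤ C + β := by
  set m := ⌊(t - h (γ 0)) / β⌋ with hm
  have h1 := hγ.2 m 0
  push_cast [sub_zero] at h1
  have hf1 : (m : ℝ) ≤ (t - h (γ 0)) / β := Int.floor_le _
  have hf2 : (t - h (γ 0)) / β < m + 1 := Int.lt_floor_add_one _
  have hb1 : β * m ≤ t - h (γ 0) := by rw [mul_comm, ← le_div_iff₀ hβ]; exact hf1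
  have hb2 : t - h (γ 0) < β * (m + 1) := by rw [mul_comm, ← div_lt_iff₀ hβ]; exact hf2
  rw [abs_le] at h1 ⊢
  constructor <;> nlinarith [h1.1, h1.2]

lemma exists_good_map {V₁ V₂ ι₁ ι₂ : Type*}
    {G₁ : SimpleGraph V₁} {G₂ : SimpleGraph V₂} {h₁ : V₁ → ℝ} {h₂ : V₂ → ℝ}
    {M β₁ β₂ C₁ C₂ K : ℝ}
    (hc₂ : G₂.Connected)
    (hM₁ : ∀ u v, G₁.Adj u v → |h₁ u - h₁ v| ≤ M)
    (hM₂ : ∀ u v, G₂.Adj u v → |h₂ u - h₂ v| ≤ M)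
    (hβ₂ : 0 < β₂) (hK : 0 < K)
    {L₁ : ι₁ → ℤ → V₁} {L₂ : ι₂ → ℤ → V₂}
    (hL₁ : IsLamination G₁ h₁ β₁ C₁ L₁) (hL₂ : IsLamination G₂ h₂ β₂ C₂ L₂)
    (f : quotGraph G₁ L₁ ≃g quotGraph G₂ L₂)
    (hmatch : ∀ (i j : ι₁), i ≠ j → ∀ (n m n' m' : ℤ),
      G₁.Adj (L₁ i n) (L₁ j m) → G₂.Adj (L₂ (f i) n') (L₂ (f j) m') →
      |max (h₁ (L₁ i n)) (h₁ (L₁ j m)) - max (h₂ (L₂ (f i) n')) (h₂ (L₂ (f j) m'))| ≤ K) :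
    ∃ (F : V₁ → V₂) (A : ℝ), 0 ≤ A ∧
      (∀ u v, G₁.Adj u v → (G₂.dist (F u) (F v) : ℝ) ≤ A) ∧
      (∀ v, |h₂ (F v) - h₁ v| ≤ C₂ + β₂) ∧
      (∀ i n, ∃ m, F (L₁ i n) = L₂ (f i) m) := by
  classical
  obtain ⟨v₂⟩ := hc₂.nonempty
  have hC₂ : 0 ≤ C₂ := (hL₂.1 (hL₂.2 v₂).exists.choose).C_nonneg
  set idx : V₁ → ι₁ := fun v => (hL₁.2 v).exists.choose with hidxdef
  have hmem : ∀ v, v ∈ Set.range (L₁ (idx v)) := fun v => (hL₁.2 v).exists.choose_spec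
  have hidx : ∀ (v : V₁) (i : ι₁), v ∈ Set.range (L₁ i) → idx v = i := by
    intro v i hi
    exact ((hL₁.2 v).unique (hmem v) hi)
  set pick : ι₂ → ℝ → ℤ := fun j t => ⌊(t - h₂ (L₂ j 0)) / β₂⌋ with hpickdef
  set F : V₁ → V₂ := fun v => L₂ (f (idx v)) (pick (f (idx v)) (h₁ v)) with hFdef
  have hFline : ∀ (i : ι₁) (n : ℤ), F (L₁ i n) = L₂ (f i) (pick (f i) (h₁ (L₁ i n))) := by
    intro i n
    have hii : idx (L₁ i n) = i := hidx _ _ ⟨n, rfl⟩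
    rw [hFdef]
    simp only
    rw [hii]
  have hFheight : ∀ v, |h₂ (F v) - h₁ v| ≤ C₂ + β₂ := by
    intro v
    exact (hL₂.1 (f (idx v))).height_near hβ₂ (h₁ v)
  set A : ℝ := (4 * |M| + 2 * K + 4 * C₂ + 3 * β₂) / β₂ with hAdef
  have hA0 : 0 ≤ A := by
    apply div_nonneg _ hβ₂.le
    have := abs_nonneg M
    linarith
  refine ⟨F, A, hA0, ?_, hFheight, fun i n => ⟨_, hFline i n⟩⟩
  intro u v huv
  have hMuv := hM₁ u v huv
  have hM0 : 0 ≤ M := (abs_nonneg _).trans hMuv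
  obtain ⟨n, hn⟩ := hmem u
  obtain ⟨m, hm⟩ := hmem v
  by_cases hij : idx u = idx v
  · -- same line
    have e1 : F u = L₂ (f (idx u)) (pick (f (idx u)) (h₁ u)) := rfl
    have e2 : F v = L₂ (f (idx u)) (pick (f (idx u)) (h₁ v)) := by
      rw [hFdef]; simp only; rw [hij]
    have hd : (G₂.dist (F u) (F v) : ℝ) ≤ (|h₂ (F u) - h₂ (F v)| + C₂) / β₂ := by
      rw [e1, e2]
      exact (hL₂.1 (f (idx u))).dist_le' hβ₂ _ _
    have hu := hFheight u
    have hv := hFheight v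
    rw [abs_le] at hu hv hMuv
    have habs : |h₂ (F u) - h₂ (F v)| ≤ M + 2 * C₂ + 2 * β₂ := by
      rw [abs_le]; constructor <;> linarith [hu.1, hu.2, hv.1, hv.2, hMuv.1, hMuv.2]
    refine hd.trans ?_
    rw [hAdef, div_le_div_iff_of_pos_right hβ₂]
    linarith [habs, abs_nonneg (h₂ (F u) - h₂ (F v)), le_abs_self M, hK]
  · -- different lines
    have hq : (quotGraph G₁ L₁).Adj (idx u) (idx v) :=
      (SimpleGraph.fromRel_adj _ (idx u) (idx v)).mpr
        ⟨hij, Or.inl ⟨n, m, by rw [hn, hm]; exact huv⟩⟩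
    have hq₂ : (quotGraph G₂ L₂).Adj (f (idx u)) (f (idx v)) := f.map_adj_iff.mpr hq
    obtain ⟨-, hcase⟩ := (SimpleGraph.fromRel_adj _ (f (idx u)) (f (idx v))).mp hq₂
    obtain ⟨n', m', hadj₂⟩ : ∃ n' m' : ℤ, G₂.Adj (L₂ (f (idx u)) n') (L₂ (f (idx v)) m') := by
      rcases hcase with ⟨n', m', ha⟩ | ⟨n', m', ha⟩
      · exact ⟨n', m', ha⟩
      · exact ⟨m', n', ha.symm⟩
    set a := L₂ (f (idx u)) n' with hadef
    set b := L₂ (f (idx v)) m' with hbdef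
    have hmax := hmatch (idx u) (idx v) hij n m n' m' (by rw [hn, hm]; exact huv) hadj₂
    rw [hn, hm] at hmax
    have hMab := hM₂ _ _ hadj₂
    -- distance pieces
    have hd1 : (G₂.dist (F u) a : ℝ) ≤ (|h₂ (F u) - h₂ a| + C₂) / β₂ := by
      rw [show F u = L₂ (f (idx u)) (pick (f (idx u)) (h₁ u)) from rfl, hadef]
      exact (hL₂.1 (f (idx u))).dist_le' hβ₂ _ _
    have hd2 : (G₂.dist b (F v) : ℝ) ≤ (|h₂ b - h₂ (F v)| + C₂) / β₂ := by
      rw [show F v = L₂ (f (idx v)) (pick (f (idx v)) (h₁ v)) from rfl, hbdef]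
      exact (hL₂.1 (f (idx v))).dist_le' hβ₂ _ _
    have hdab : (G₂.dist a b : ℝ) ≤ 1 := by
      have := SimpleGraph.dist_le hadj₂.toWalk
      simp at this
      exact_mod_cast this
    have htri : (G₂.dist (F u) (F v) : ℝ) ≤
        (G₂.dist (F u) a : ℝ) + (G₂.dist a b : ℝ) + (G₂.dist b (F v) : ℝ) := by
      have t1 := hc₂.dist_triangle (u := F u) (v := a) (w := F v)
      have t2 := hc₂.dist_triangle (u := a) (v := b) (w := F v)
      have h3 : G₂.dist (F u) (F v) ≤ G₂.dist (F u) a + G₂.dist a b + G₂.dist b (F v) := by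
        omega
      exact_mod_cast h3
    -- height estimates
    have hu := hFheight u
    have hv := hFheight v
    have e1 : |h₁ u - max (h₁ u) (h₁ v)| ≤ M := by
      rcases max_cases (h₁ u) (h₁ v) with ⟨he, -⟩ | ⟨he, -⟩ <;> rw [he]
      · simpa using hM0
      · exact hMuv
    have e2 : |h₁ v - max (h₁ u) (h₁ v)| ≤ M := by
      rcases max_cases (h₁ u) (h₁ v) with ⟨he, -⟩ | ⟨he, -⟩ <;> rw [he]
      · rw [abs_sub_comm]; exact hMuv
      · simpa using hM0
    have e3 : |h₂ a - max (h₂ a) (h₂ b)| ≤ M := by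
      rcases max_cases (h₂ a) (h₂ b) with ⟨he, -⟩ | ⟨he, -⟩ <;> rw [he]
      · simpa using hM0
      · exact hMab
    have e4 : |h₂ b - max (h₂ a) (h₂ b)| ≤ M := by
      rcases max_cases (h₂ a) (h₂ b) with ⟨he, -⟩ | ⟨he, -⟩ <;> rw [he]
      · rw [abs_sub_comm]; exact hMab
      · simpa using hM0
    rw [abs_le] at hu hv e1 e2 e3 e4 hmax
    have f1 : |h₂ (F u) - h₂ a| ≤ 2 * M + K + C₂ + β₂ := by
      rw [abs_le]
      constructor <;>
        linarith [hu.1, hu.2, e1.1, e1.2, hmax.1, hmax.2, e3.1, e3.2]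
    have f2 : |h₂ b - h₂ (F v)| ≤ 2 * M + K + C₂ + β₂ := by
      rw [abs_le]
      constructor <;>
        linarith [hv.1, hv.2, e2.1, e2.2, hmax.1, hmax.2, e4.1, e4.2]
    have g1 : (G₂.dist (F u) a : ℝ) ≤ (2 * M + K + 2 * C₂ + β₂) / β₂ := by
      refine hd1.trans ?_
      rw [div_le_div_iff_of_pos_right hβ₂]
      linarith [f1]
    have g2 : (G₂.dist b (F v) : ℝ) ≤ (2 * M + K + 2 * C₂ + β₂) / β₂ := by
      refine hd2.trans ?_
      rw [div_le_div_iff_of_pos_right hβ₂]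
      linarith [f2]
    have hAeq : A = (2 * M + K + 2 * C₂ + β₂) / β₂ + 1 + (2 * M + K + 2 * C₂ + β₂) / β₂ +
        (4 * (|M| - M)) / β₂ := by
      rw [hAdef]; field_simp; ring
    have hMM : 0 ≤ (4 * (|M| - M)) / β₂ :=
      div_nonneg (by linarith [le_abs_self M]) hβ₂.le
    linarith [htri, g1, g2, hdab]

/-- An isomorphism between the quotient trees of laminated coarsely oriented trees
matching the heights of corresponding edges up to a bounded error induces a coarsely
orientation preserving quasi-isometry of the trees mapping each line of the first
lamination into the corresponding line of the second. -/
theorem quotient_iso_induces_cop_qi {V₁ V₂ ι₁ ι₂ : Type*}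
    (G₁ : SimpleGraph V₁) (G₂ : SimpleGraph V₂) (h₁ : V₁ → ℝ) (h₂ : V₂ → ℝ)
    (M β₁ β₂ C₁ C₂ K : ℝ)
    (hT₁ : G₁.IsTree) (hT₂ : G₂.IsTree)
    (hdeg₁ : ∀ v, (G₁.neighborSet v).Finite ∧ 3 ≤ (G₁.neighborSet v).ncard)
    (hdeg₂ : ∀ v, (G₂.neighborSet v).Finite ∧ 3 ≤ (G₂.neighborSet v).ncard)
    (hM₁ : ∀ u v, G₁.Adj u v → |h₁ u - h₁ v| ≤ M)
    (hM₂ : ∀ u v, G₂.Adj u v → |h₂ u - h₂ v| ≤ M)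
    (hβ₁ : 0 < β₁) (hβ₂ : 0 < β₂)
    (L₁ : ι₁ → ℤ → V₁) (L₂ : ι₂ → ℤ → V₂)
    (hL₁ : IsLamination G₁ h₁ β₁ C₁ L₁) (hL₂ : IsLamination G₂ h₂ β₂ C₂ L₂)
    (f : quotGraph G₁ L₁ ≃g quotGraph G₂ L₂) (hK : 0 < K)
    (hmatch : ∀ (i j : ι₁), i ≠ j → ∀ (n m n' m' : ℤ),
      G₁.Adj (L₁ i n) (L₁ j m) → G₂.Adj (L₂ (f i) n') (L₂ (f j) m') →
      |max (h₁ (L₁ i n)) (h₁ (L₁ j m)) - max (h₂ (L₂ (f i) n')) (h₂ (L₂ (f j) m'))| ≤ K) :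
    ∃ F : V₁ → V₂, IsCOPQuasiIsometry G₁ h₁ G₂ h₂ F ∧
      ∀ (i : ι₁) (n : ℤ), ∃ m : ℤ, F (L₁ i n) = L₂ (f i) m := by
  classical
  have hc₁ := hT₁.isConnected
  have hc₂ := hT₂.isConnected
  obtain ⟨v₁⟩ := hc₁.nonempty
  obtain ⟨v₂⟩ := hc₂.nonempty
  have hC₁ : 0 ≤ C₁ := (hL₁.1 (hL₁.2 v₁).exists.choose).C_nonneg
  have hC₂ : 0 ≤ C₂ := (hL₂.1 (hL₂.2 v₂).exists.choose).C_nonneg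
  -- the matching hypothesis for the inverse isomorphism
  have hmatch' : ∀ (i j : ι₂), i ≠ j → ∀ (n m n' m' : ℤ),
      G₂.Adj (L₂ i n) (L₂ j m) → G₁.Adj (L₁ (f.symm i) n') (L₁ (f.symm j) m') →
      |max (h₂ (L₂ i n)) (h₂ (L₂ j m)) -
        max (h₁ (L₁ (f.symm i) n')) (h₁ (L₁ (f.symm j) m'))| ≤ K := by
    intro i j hne n m n' m' hadj₂ hadj₁
    have hne' : f.symm i ≠ f.symm j := fun e => hne (f.symm.injective e)
    have hadj₂' : G₂.Adj (L₂ (f (f.symm i)) n) (L₂ (f (f.symm j)) m) := by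
      rw [RelIso.apply_symm_apply, RelIso.apply_symm_apply]; exact hadj₂
    have := hmatch (f.symm i) (f.symm j) hne' n' m' n m hadj₁ hadj₂'
    rw [RelIso.apply_symm_apply, RelIso.apply_symm_apply, abs_sub_comm] at this
    exact this
  obtain ⟨F, A₁, hA₁0, hFadj, hFh, hFl⟩ :=
    exists_good_map hc₂ hM₁ hM₂ hβ₂ hK hL₁ hL₂ f hmatch
  obtain ⟨Gm, A₂, hA₂0, hGadj, hGh, hGl⟩ :=
    exists_good_map hc₁ hM₂ hM₁ hβ₁ hK hL₂ hL₁ f.symm hmatch'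
  have hFdist := adj_bound_to_dist_bound hc₁ hc₂ hA₁0 hFadj
  have hGdist := adj_bound_to_dist_bound hc₂ hc₁ hA₂0 hGadj
  set B₁ : ℝ := (C₂ + β₂ + C₁ + β₁ + C₁) / β₁ with hB₁def
  set B₂ : ℝ := (C₁ + β₁ + C₂ + β₂ + C₂) / β₂ with hB₂def
  have hB₁0 : 0 ≤ B₁ := div_nonneg (by linarith) hβ₁.le
  have hB₂0 : 0 ≤ B₂ := div_nonneg (by linarith) hβ₂.le
  -- each point is close to its image under the composite Gm ∘ F
  have hB₁ : ∀ x : V₁, (G₁.dist x (Gm (F x)) : ℝ) ≤ B₁ := by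
    intro x
    obtain ⟨n, hn⟩ := (hL₁.2 x).exists.choose_spec
    set i := (hL₁.2 x).exists.choose with hidef
    obtain ⟨m, hm⟩ := hFl i n
    obtain ⟨m', hm'⟩ := hGl (f i) m
    rw [RelIso.symm_apply_apply] at hm'
    have hcomp : Gm (F x) = L₁ i m' := by rw [← hn, hm, hm']
    have hdist : (G₁.dist (L₁ i n) (L₁ i m') : ℝ) ≤
        (|h₁ (L₁ i n) - h₁ (L₁ i m')| + C₁) / β₁ := (hL₁.1 i).dist_le' hβ₁ n m'
    rw [hn, ← hcomp] at hdist
    refine hdist.trans ?_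
    rw [hB₁def, div_le_div_iff_of_pos_right hβ₁]
    have t1 := hFh x
    have t2 := hGh (F x)
    rw [abs_le] at t1 t2
    have : |h₁ x - h₁ (Gm (F x))| ≤ C₂ + β₂ + C₁ + β₁ := by
      rw [abs_le]; constructor <;> linarith [t1.1, t1.2, t2.1, t2.2]
    linarith
  have hB₂ : ∀ y : V₂, (G₂.dist y (F (Gm y)) : ℝ) ≤ B₂ := by
    intro y
    obtain ⟨n, hn⟩ := (hL₂.2 y).exists.choose_spec
    set j := (hL₂.2 y).exists.choose with hjdef
    obtain ⟨m, hm⟩ := hGl j n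
    obtain ⟨m', hm'⟩ := hFl (f.symm j) m
    rw [RelIso.apply_symm_apply] at hm'
    have hcomp : F (Gm y) = L₂ j m' := by rw [← hn, hm, hm']
    have hdist : (G₂.dist (L₂ j n) (L₂ j m') : ℝ) ≤
        (|h₂ (L₂ j n) - h₂ (L₂ j m')| + C₂) / β₂ := (hL₂.1 j).dist_le' hβ₂ n m'
    rw [hn, ← hcomp] at hdist
    refine hdist.trans ?_
    rw [hB₂def, div_le_div_iff_of_pos_right hβ₂]
    have t1 := hGh y
    have t2 := hFh (Gm y)
    rw [abs_le] at t1 t2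
    have : |h₂ y - h₂ (F (Gm y))| ≤ C₁ + β₁ + C₂ + β₂ := by
      rw [abs_le]; constructor <;> linarith [t1.1, t1.2, t2.1, t2.2]
    linarith
  set Kc : ℝ := max 1 (max A₁ A₂) with hKcdef
  set Cc : ℝ := max (2 * B₁) B₂ with hCcdef
  have hKc1 : (1 : ℝ) ≤ Kc := le_max_left _ _
  have hKc0 : (0 : ℝ) < Kc := lt_of_lt_of_le one_pos hKc1
  have hKcA₁ : A₁ ≤ Kc := (le_max_left _ _).trans (le_max_right _ _)
  have hKcA₂ : A₂ ≤ Kc := (le_max_right _ _).trans (le_max_right _ _)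
  have hCc0 : (0 : ℝ) ≤ Cc := le_trans (by linarith) (le_max_left (2 * B₁) B₂)
  refine ⟨F, ⟨⟨Kc, Cc, hKc1, hCc0, fun x x' => ⟨?_, ?_⟩, fun y => ⟨Gm y, ?_⟩⟩,
    ⟨2 * (C₂ + β₂), by linarith, ?_⟩⟩, fun i n => hFl i n⟩
  · -- lower bound
    have tri : (G₁.dist x x' : ℝ) ≤ B₁ + A₂ * (G₂.dist (F x) (F x') : ℝ) + B₁ := by
      have t1 : G₁.dist x x' ≤ G₁.dist x (Gm (F x)) + G₁.dist (Gm (F x)) (Gm (F x')) +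
          G₁.dist (Gm (F x')) x' := by
        have a1 := hc₁.dist_triangle (u := x) (v := Gm (F x)) (w := x')
        have a2 := hc₁.dist_triangle (u := Gm (F x)) (v := Gm (F x')) (w := x')
        omega
      have t1' : (G₁.dist x x' : ℝ) ≤ (G₁.dist x (Gm (F x)) : ℝ) +
          (G₁.dist (Gm (F x)) (Gm (F x')) : ℝ) + (G₁.dist (Gm (F x')) x' : ℝ) := by
        exact_mod_cast t1
      have t2 := hGdist (F x) (F x')
      have t3 := hB₁ x
      have t4 : (G₁.dist (Gm (F x')) x' : ℝ) ≤ B₁ := by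
        rw [SimpleGraph.dist_comm]; exact hB₁ x'
      linarith
    have hd₂0 : (0 : ℝ) ≤ (G₂.dist (F x) (F x') : ℝ) := by positivity
    rw [sub_le_iff_le_add, div_le_iff₀ hKc0]
    have e1 : A₂ * (G₂.dist (F x) (F x') : ℝ) ≤ Kc * (G₂.dist (F x) (F x') : ℝ) :=
      mul_le_mul_of_nonneg_right hKcA₂ hd₂0
    have e2 : 2 * B₁ ≤ Cc := le_max_left _ _
    have e3 : Cc ≤ Kc * Cc := le_mul_of_one_le_left hCc0 hKc1
    nlinarith [tri, e1, e2, e3]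
  · -- upper bound
    have t1 := hFdist x x'
    have hd₁0 : (0 : ℝ) ≤ (G₁.dist x x' : ℝ) := by positivity
    have e1 : A₁ * (G₁.dist x x' : ℝ) ≤ Kc * (G₁.dist x x' : ℝ) :=
      mul_le_mul_of_nonneg_right hKcA₁ hd₁0
    linarith
  · -- coarse surjectivity
    exact (hB₂ y).trans (le_max_right _ _)
  · -- coarse orientation preservation
    intro u v
    have t1 := hFh u
    have t2 := hFh v
    rw [abs_le] at t1 t2 ⊢
    constructor <;> linarith [t1.1, t1.2, t2.1, t2.2]
end
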